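/- arXiv:2001.11615 — 5 statements merged into one kernel-verified Lean document; each statement's English description precedes it below -/
import Mathlib

section
/- Let ψ ∈ 𝒞 and w ∈ ℝⁿ. There exists a solution x ∈ 𝒞 of the linear boundary value problem x'(t) − A(t)x(t) = ψ(t) for all t ≥ 0 subject to Γ(x) = w if and only if Wᵀ [ w − Γ( Φ(·)∫₀· Φ⁻¹(s)ψ(s) ds ) ] = 0. -/
open MeasureTheory Set RealInnerProductSpace

noncomputable section

/-- `Euc n` is Euclidean space `ℝⁿ` with the Euclidean norm. -/
abbrev Euc (n : ℕ) := EuclideanSpace ℝ (Fin n)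

/-- `Cb n` is the Banach space `𝒞` of bounded continuous functions from `[0,∞)` into `ℝⁿ`,
with the supremum norm. -/
abbrev Cb (n : ℕ) := BoundedContinuousFunction (Set.Ici (0:ℝ)) (Euc n)

/-! Every solution of `x' = A x + ψ` on `[0,∞)` is `Φ(t) c + x_p(t)`, where
`x_p(t) = Φ(t) ∫₀ᵗ Φ⁻¹(s) ψ(s) ds` is the variation-of-constants solution: the difference of two
solutions `y` satisfies `(Φ⁻¹ y)' = 0`. As `x_p(0) = 0` and `x_p = Tψ` on `[0,∞)`, a solution
in `𝒞` with initial value `c` has `Γ x = Λ c + Γ Tψ`. Hence the problem is solvable iff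
`w - Γ Tψ ∈ range Λ = (ker Λᵀ)ᗮ = (span W)ᗮ`. -/

theorem ContinuousLinearMap.mem_range_iff_forall_inner_eq_zero {𝕜 E F ι : Type*} [RCLike 𝕜]
    [NormedAddCommGroup E] [InnerProductSpace 𝕜 E] [CompleteSpace E]
    [NormedAddCommGroup F] [InnerProductSpace 𝕜 F] [CompleteSpace F] [FiniteDimensional 𝕜 F]
    (T : E →L[𝕜] F) {W : ι → F}
    (hW : Submodule.span 𝕜 (range W) = LinearMap.ker (adjoint T : F →ₗ[𝕜] E)) (u : F) :
    u ∈ LinearMap.range (T : E →ₗ[𝕜] F) ↔ ∀ i, inner 𝕜 (W i) u = 0 := by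
  rw [← Submodule.orthogonal_orthogonal (LinearMap.range (T : E →ₗ[𝕜] F)), T.orthogonal_range,
    ← hW, Submodule.mem_orthogonal']
  show Submodule.span 𝕜 (range W) ≤ LinearMap.ker (innerₛₗ 𝕜 u) ↔ _
  simp [Submodule.span_le, range_subset_iff, inner_eq_zero_symm]

theorem ContinuousOn.hasDerivWithinAt_integral_Ici {E : Type*} [NormedAddCommGroup E]
    [NormedSpace ℝ E] [CompleteSpace E] {f : ℝ → E} {a t : ℝ} (hf : ContinuousOn f (Ici a))
    (ht : t ∈ Ici a) : HasDerivWithinAt (fun u => ∫ x in a..u, f x) (f t) (Ici a) t := by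
  set g : ℝ → E := fun x => f (max x a)
  have hg : Continuous g :=
    hf.comp_continuous (continuous_id.max continuous_const) fun x => le_max_right x a
  have hfg : ∀ u ∈ Ici a, ∫ x in a..u, f x = ∫ x in a..u, g x := fun u hu =>
    intervalIntegral.integral_congr fun x hx => by
      rw [uIcc_of_le hu] at hx
      simp [g, max_eq_left hx.1]
  have := (intervalIntegral.integral_hasDerivAt_right (hg.intervalIntegrable a t)
    (hg.stronglyMeasurableAtFilter _ _) hg.continuousAt).hasDerivWithinAt (s := Ici a)
  simpa [g, max_eq_left (mem_Ici.mp ht)] using this.congr_of_mem hfg ht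

theorem HasDerivWithinAt.inverse_of_forall_mul_eq_one {R : Type*} [NormedRing R]
    [NormedAlgebra ℝ R] [CompleteSpace R] {Φ Φinv : ℝ → R} {Φ' : R} {s : Set ℝ} {t : ℝ}
    (hΦ : HasDerivWithinAt Φ Φ' s t) (hinv : ∀ τ ∈ s, Φ τ * Φinv τ = 1 ∧ Φinv τ * Φ τ = 1)
    (ht : t ∈ s) : HasDerivWithinAt Φinv (-(Φinv t * Φ' * Φinv t)) s t := by
  let unit : ∀ τ ∈ s, Rˣ := fun τ hτ => ⟨Φ τ, Φinv τ, (hinv τ hτ).1, (hinv τ hτ).2⟩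
  have hΦinv : ∀ τ ∈ s, Φinv τ = Ring.inverse (Φ τ) := fun τ hτ =>
    (Ring.inverse_unit (unit τ hτ)).symm
  exact ((hasFDerivAt_ringInverse (unit t ht)).comp_hasDerivWithinAt t hΦ).congr_of_mem hΦinv ht

theorem Convex.eq_of_hasDerivWithinAt_zero {E : Type*} [NormedAddCommGroup E] [NormedSpace ℝ E]
    {f : ℝ → E} {s : Set ℝ} (hs : Convex ℝ s) (hf : ∀ t ∈ s, HasDerivWithinAt f 0 s t)
    {x y : ℝ} (hx : x ∈ s) (hy : y ∈ s) : f y = f x := by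
  have := hs.norm_image_sub_le_of_norm_hasDerivWithin_le hf (fun _ _ => norm_zero.le) hx hy
  simpa [sub_eq_zero] using this

section LinearODE

variable {E : Type*} [NormedAddCommGroup E] [NormedSpace ℝ E] {A Φ Φinv : ℝ → E →L[ℝ] E}
  {s : Set ℝ} {t : ℝ}

theorem hasDerivWithinAt_fundamental_apply_add {f y : ℝ → E}
    (hΦ : HasDerivWithinAt Φ (A t ∘L Φ t) s t) (hy : HasDerivWithinAt y (A t (y t) + f t) s t)
    (v : E) : HasDerivWithinAt (fun τ => Φ τ v + y τ) (A t (Φ t v + y t) + f t) s t := by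
  refine ((hΦ.clm_apply (hasDerivWithinAt_const t s v)).add hy).congr_deriv ?_
  simp only [ContinuousLinearMap.comp_apply, map_add, map_zero]
  abel

theorem hasDerivWithinAt_fundamental_apply_of_hasDerivWithinAt {f F : ℝ → E}
    (hΦ : HasDerivWithinAt Φ (A t ∘L Φ t) s t) (hinv : Φ t ∘L Φinv t = 1)
    (hF : HasDerivWithinAt F (Φinv t (f t)) s t) :
    HasDerivWithinAt (fun τ => Φ τ (F τ)) (A t (Φ t (F t)) + f t) s t := by
  convert hΦ.clm_apply hF using 1
  rw [← ContinuousLinearMap.comp_apply (Φ t), hinv]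
  simp

variable [CompleteSpace E]

theorem eq_fundamental_apply_of_hasDerivWithinAt {t₀ : ℝ} {x : ℝ → E} (hs : Convex ℝ s)
    (ht₀ : t₀ ∈ s) (hΦt₀ : Φ t₀ = 1)
    (hΦ : ∀ t ∈ s, HasDerivWithinAt Φ (A t ∘L Φ t) s t)
    (hinv : ∀ t ∈ s, Φ t ∘L Φinv t = 1 ∧ Φinv t ∘L Φ t = 1)
    (hx : ∀ t ∈ s, HasDerivWithinAt x (A t (x t)) s t) (ht : t ∈ s) : x t = Φ t (x t₀) := by
  have hΦΦinv : ∀ τ ∈ s, ∀ y, Φ τ (Φinv τ y) = y := fun τ hτ y =>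
    DFunLike.congr_fun (hinv τ hτ).1 y
  have hconst : ∀ τ ∈ s, HasDerivWithinAt (fun τ => Φinv τ (x τ)) 0 s τ := fun τ hτ => by
    refine (((hΦ τ hτ).inverse_of_forall_mul_eq_one hinv hτ).clm_apply (hx τ hτ)).congr_deriv ?_
    simp [hΦΦinv τ hτ]
  have hΦinvt₀ : Φinv t₀ = 1 := by
    simpa [hΦt₀, ContinuousLinearMap.one_def] using (hinv t₀ ht₀).2
  calc x t = Φ t (Φinv t (x t)) := (hΦΦinv t ht _).symm
    _ = Φ t (x t₀) := by rw [hs.eq_of_hasDerivWithinAt_zero hconst ht₀ ht, hΦinvt₀]; rfl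

theorem eq_fundamental_apply_sub_add_of_hasDerivWithinAt {t₀ : ℝ} {f x y : ℝ → E}
    (hs : Convex ℝ s) (ht₀ : t₀ ∈ s) (hΦt₀ : Φ t₀ = 1)
    (hΦ : ∀ t ∈ s, HasDerivWithinAt Φ (A t ∘L Φ t) s t)
    (hinv : ∀ t ∈ s, Φ t ∘L Φinv t = 1 ∧ Φinv t ∘L Φ t = 1)
    (hx : ∀ t ∈ s, HasDerivWithinAt x (A t (x t) + f t) s t)
    (hy : ∀ t ∈ s, HasDerivWithinAt y (A t (y t) + f t) s t) (ht : t ∈ s) :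
    x t = Φ t (x t₀ - y t₀) + y t := by
  have hxy : ∀ t ∈ s, HasDerivWithinAt (x - y) (A t ((x - y) t)) s t := fun t ht =>
    ((hx t ht).sub (hy t ht)).congr_deriv (by simp)
  exact eq_add_of_sub_eq (eq_fundamental_apply_of_hasDerivWithinAt hs ht₀ hΦt₀ hΦ hinv hxy ht)

end LinearODE

theorem stmt_2_general {n : ℕ}
    -- the coefficient matrix `A`, the fundamental matrix `Φ` and its pointwise inverse `Φinv`
    (A Φ Φinv : ℝ → (Euc n →L[ℝ] Euc n))
    (hΦ0 : Φ 0 = 1)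
    (hΦode : ∀ t ∈ Set.Ici (0:ℝ), HasDerivWithinAt Φ (A t ∘L Φ t) (Set.Ici 0) t)
    (hΦinv : ∀ t ∈ Set.Ici (0:ℝ), Φ t ∘L Φinv t = 1 ∧ Φinv t ∘L Φ t = 1)
    -- the bounded linear boundary operator `Γ` and the matrix `Λ`, whose columns are `Γ(Φᵢ)`
    (Γ : Cb n →L[ℝ] Euc n)
    (ΦC : Euc n → Cb n) (hΦC : ∀ (v : Euc n) (t : Set.Ici (0:ℝ)), ΦC v t = Φ t v)
    (Λ : Euc n →L[ℝ] Euc n) (hΛ : ∀ v, Λ v = Γ (ΦC v))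
    -- `p = dim ker Λ ≥ 1`, and the columns of `W` form a basis of `ker (Λᵀ)`
    (p : ℕ)
    (W : Fin p → Euc n)
    (hWspan : Submodule.span ℝ (Set.range W) = LinearMap.ker (ContinuousLinearMap.adjoint Λ : Euc n →ₗ[ℝ] Euc n))
    -- the data: `ψ ∈ 𝒞`, `w ∈ ℝⁿ`, and the function `Φ(·)∫₀· Φ⁻¹(s)ψ(s) ds ∈ 𝒞`
    (ψC : Cb n) (w : Euc n)
    (Tψ : Cb n)
    (hTψ : ∀ t : Set.Ici (0:ℝ),
      Tψ t = Φ t (∫ s in (0:ℝ)..(t:ℝ), Φinv s (ψC (Set.projIci 0 s)))) :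
    -- the linear BVP has a solution in `𝒞` iff `Wᵀ[w − Γ(Φ(·)∫₀· Φ⁻¹(s)ψ(s) ds)] = 0`
    (∃ (xC : Cb n) (xe : ℝ → Euc n), (∀ t : Set.Ici (0:ℝ), xC t = xe t) ∧
        (∀ t ∈ Set.Ici (0:ℝ),
          HasDerivWithinAt xe (A t (xe t) + ψC (Set.projIci 0 t)) (Set.Ici 0) t) ∧
        Γ xC = w) ↔
      (∀ i, ⟪W i, w - Γ Tψ⟫ = 0) := by
  set ψ : ℝ → Euc n := fun t => ψC (projIci 0 t)
  set xp : ℝ → Euc n := fun t => Φ t (∫ s in (0:ℝ)..t, Φinv s (ψ s))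
  have hΦinv_cont : ContinuousOn Φinv (Ici 0) := fun t ht =>
    ((hΦode t ht).inverse_of_forall_mul_eq_one hΦinv ht).continuousWithinAt
  have hψ_cont : Continuous ψ :=
    ψC.continuous.comp ((continuous_const.max continuous_id).subtype_mk _)
  have hxp : ∀ t ∈ Ici (0:ℝ), HasDerivWithinAt xp (A t (xp t) + ψ t) (Ici 0) t := fun t ht =>
    hasDerivWithinAt_fundamental_apply_of_hasDerivWithinAt (hΦode t ht) (hΦinv t ht).1
      ((hΦinv_cont.clm_apply hψ_cont.continuousOn).hasDerivWithinAt_integral_Ici ht)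
  have hxp0 : xp 0 = 0 := by simp [xp]
  rw [← Λ.mem_range_iff_forall_inner_eq_zero hWspan]
  constructor
  · rintro ⟨xC, xe, hxCe, hxe, rfl⟩
    have hxC : xC = ΦC (xe 0) + Tψ := by
      ext1 t
      rw [hxCe, BoundedContinuousFunction.add_apply, hΦC, hTψ,
        eq_fundamental_apply_sub_add_of_hasDerivWithinAt (convex_Ici 0) self_mem_Ici hΦ0 hΦode
          hΦinv hxe hxp t.2, hxp0, sub_zero]
    exact ⟨xe 0, by simp [hxC, hΛ]⟩
  · rintro ⟨v, hv⟩
    refine ⟨ΦC v + Tψ, fun t => Φ t v + xp t, fun t => by simp [hΦC, hTψ, xp, ψ],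
      fun t ht => hasDerivWithinAt_fundamental_apply_add (hΦode t ht) (hxp t ht) v, ?_⟩
    rw [map_add, ← hΛ, ← ContinuousLinearMap.coe_coe, hv, sub_add_cancel]

theorem stmt_2 {n : ℕ} (hn : 1 ≤ n)
    -- the coefficient matrix `A`, the fundamental matrix `Φ` and its pointwise inverse `Φinv`
    (A Φ Φinv : ℝ → (Euc n →L[ℝ] Euc n))
    (hA : ContinuousOn A (Set.Ici 0))
    (hΦ0 : Φ 0 = 1)
    (hΦode : ∀ t ∈ Set.Ici (0:ℝ), HasDerivWithinAt Φ (A t ∘L Φ t) (Set.Ici 0) t)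
    (hΦinv : ∀ t ∈ Set.Ici (0:ℝ), Φ t ∘L Φinv t = 1 ∧ Φinv t ∘L Φ t = 1)
    -- condition guaranteeing `Φ(·)∫₀· Φ⁻¹(s)ψ(s) ds ∈ 𝒞`
    (K α : ℝ) (hK : 0 < K) (hα : 0 < α)
    (hKα : ∀ s t : ℝ, 0 ≤ s → s ≤ t → ‖Φ t ∘L Φinv s‖ ≤ K * Real.exp (-α * (t - s)))
    -- the bounded linear boundary operator `Γ` and the matrix `Λ`, whose columns are `Γ(Φᵢ)`
    (Γ : Cb n →L[ℝ] Euc n)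
    (ΦC : Euc n → Cb n) (hΦC : ∀ (v : Euc n) (t : Set.Ici (0:ℝ)), ΦC v t = Φ t v)
    (Λ : Euc n →L[ℝ] Euc n) (hΛ : ∀ v, Λ v = Γ (ΦC v))
    -- `p = dim ker Λ ≥ 1`, and the columns of `W` form a basis of `ker (Λᵀ)`
    (p : ℕ) (hp : 1 ≤ p)
    (hfinrank : Module.finrank ℝ (LinearMap.ker (Λ : Euc n →ₗ[ℝ] Euc n)) = p)
    (W : Fin p → Euc n)
    (hWmem : ∀ i, W i ∈ LinearMap.ker (ContinuousLinearMap.adjoint Λ : Euc n →ₗ[ℝ] Euc n))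
    (hWli : LinearIndependent ℝ W)
    (hWspan : Submodule.span ℝ (Set.range W) = LinearMap.ker (ContinuousLinearMap.adjoint Λ : Euc n →ₗ[ℝ] Euc n))
    -- the data: `ψ ∈ 𝒞`, `w ∈ ℝⁿ`, and the function `Φ(·)∫₀· Φ⁻¹(s)ψ(s) ds ∈ 𝒞`
    (ψC : Cb n) (w : Euc n)
    (Tψ : Cb n)
    (hTψ : ∀ t : Set.Ici (0:ℝ),
      Tψ t = Φ t (∫ s in (0:ℝ)..(t:ℝ), Φinv s (ψC (Set.projIci 0 s)))) :
    -- the linear BVP has a solution in `𝒞` iff `Wᵀ[w − Γ(Φ(·)∫₀· Φ⁻¹(s)ψ(s) ds)] = 0`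
    (∃ (xC : Cb n) (xe : ℝ → Euc n), (∀ t : Set.Ici (0:ℝ), xC t = xe t) ∧
        (∀ t ∈ Set.Ici (0:ℝ),
          HasDerivWithinAt xe (A t (xe t) + ψC (Set.projIci 0 t)) (Set.Ici 0) t) ∧
        Γ xC = w) ↔
      (∀ i, ⟪W i, w - Γ Tψ⟫ = 0) :=
  stmt_2_general A Φ Φinv hΦ0 hΦode hΦinv Γ ΦC hΦC Λ hΛ p W hWspan ψC w Tψ hTψ
end
end

section
/- If Λ is invertible, then for every ψ ∈ 𝒞 and every w ∈ ℝⁿ the linear boundary value problem x'(t) − A(t)x(t) = ψ(t) for all t ≥ 0 subject to Γ(x) = w has a unique solution x ∈ 𝒞, namely the solution with initial value x(0) = Λ⁻¹[ w − Γ( Φ(·)∫₀· Φ⁻¹(s)ψ(s) ds ) ]. -/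
/-! Variation of constants: for every `c`, `t ↦ Φ t (c + ∫₀ᵗ Φ⁻¹ψ)` solves `x' = A x + ψ`, and by
uniqueness for linear equations every solution is of this form with `c = x 0`. In `𝒞` this solution
is `ΦC c + Tψ`, so the boundary condition reads `Λ c + Γ Tψ = w`, which the invertibility of `Λ`
solves uniquely. -/

open MeasureTheory Set

noncomputable section

theorem ContinuousOn.of_mul_eq_one {X R : Type*} [TopologicalSpace X] [NormedRing R]
    [HasSummableGeomSeries R] {f g : X → R} {s : Set X} (hf : ContinuousOn f s)
    (hfg : ∀ x ∈ s, f x * g x = 1 ∧ g x * f x = 1) : ContinuousOn g s := by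
  have hg : EqOn g (Ring.inverse ∘ f) s := fun x hx =>
    (Ring.inverse_unit ⟨f x, g x, (hfg x hx).1, (hfg x hx).2⟩).symm
  refine ContinuousOn.congr (fun x hx => ?_) hg
  have hinv : ContinuousAt Ring.inverse (f x) :=
    NormedRing.inverse_continuousAt ⟨f x, g x, (hfg x hx).1, (hfg x hx).2⟩
  exact hinv.comp_continuousWithinAt (hf x hx)

section

variable {E : Type*} [NormedAddCommGroup E] [NormedSpace ℝ E]

theorem hasDerivWithinAt_integral_of_continuousOn_Ici [CompleteSpace E]
    {f : ℝ → E} {a t : ℝ} (hf : ContinuousOn f (Ici a))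
    (ht : t ∈ Ici a) : HasDerivWithinAt (fun u => ∫ x in a..u, f x) (f t) (Ici a) t := by
  set g : ℝ → E := fun x => f (max a x)
  have hgf : EqOn g f (Ici a) := fun x hx => by simp only [g, max_eq_right (mem_Ici.1 hx)]
  have hg : Continuous g :=
    hf.comp_continuous (continuous_const.max continuous_id) fun x => le_max_left a x
  have hG : HasDerivWithinAt (fun u => ∫ x in a..u, g x) (f t) (Ici a) t :=
    hgf ht ▸ (hg.integral_hasStrictDerivAt a t).hasDerivAt.hasDerivWithinAt
  refine hG.congr_of_mem (fun u hu => intervalIntegral.integral_congr fun x hx => ?_) ht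
  rw [uIcc_of_le (mem_Ici.1 hu)] at hx
  exact (hgf hx.1).symm

theorem hasDerivWithinAt_variation_of_constants
    {A Φ Φinv : ℝ → E →L[ℝ] E} {G ψ : ℝ → E} {s : Set ℝ} {t : ℝ}
    (hΦ : HasDerivWithinAt Φ (A t ∘L Φ t) s t) (hG : HasDerivWithinAt G (Φinv t (ψ t)) s t)
    (hinv : Φ t ∘L Φinv t = 1) (c : E) :
    HasDerivWithinAt (fun u => Φ u (c + G u)) (A t (Φ t (c + G t)) + ψ t) s t := by
  convert hΦ.clm_apply (hG.const_add c) using 1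
  rw [ContinuousLinearMap.comp_apply, ← ContinuousLinearMap.comp_apply (Φ t), hinv,
    one_apply_eq_self]

theorem eqOn_Ici_of_hasDerivWithinAt_linear
    {A : ℝ → E →L[ℝ] E} {ψ y z : ℝ → E} {a : ℝ}
    (hA : ContinuousOn A (Ici a))
    (hy : ∀ t ∈ Ici a, HasDerivWithinAt y (A t (y t) + ψ t) (Ici a) t)
    (hz : ∀ t ∈ Ici a, HasDerivWithinAt z (A t (z t) + ψ t) (Ici a) t)
    (ha : y a = z a) : EqOn y z (Ici a) := by
  intro b hb
  obtain ⟨C, hC⟩ := isCompact_Icc.exists_bound_of_continuousOn (hA.mono Icc_subset_Ici_self)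
  have hlip : ∀ t ∈ Ico a b, LipschitzOnWith C.toNNReal (fun x => A t x + ψ t) univ :=
    fun t ht => LipschitzOnWith.of_dist_le_mul fun x _ x' _ => by
      rw [dist_add_right, dist_eq_norm, dist_eq_norm, ← map_sub]
      exact (A t).le_of_opNorm_le
        ((hC t (Ico_subset_Icc_self ht)).trans (Real.le_coe_toNNReal C)) _
  have hcont {f : ℝ → E} (hf : ∀ t ∈ Ici a, HasDerivWithinAt f (A t (f t) + ψ t) (Ici a) t) :
      ContinuousOn f (Icc a b) :=
    fun t ht => (hf t ht.1).continuousWithinAt.mono Icc_subset_Ici_self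
  have hderiv {f : ℝ → E} (hf : ∀ t ∈ Ici a, HasDerivWithinAt f (A t (f t) + ψ t) (Ici a) t) :
      ∀ t ∈ Ico a b, HasDerivWithinAt f (A t (f t) + ψ t) (Ici t) t :=
    fun t ht => (hf t ht.1).mono (Ici_subset_Ici.2 ht.1)
  exact ODE_solution_unique_of_mem_Icc_right hlip (hcont hy) (hderiv hy) (fun _ _ => trivial)
    (hcont hz) (hderiv hz) (fun _ _ => trivial) ha ⟨hb, le_rfl⟩

end

theorem stmt_3_general {n : ℕ}
    -- the coefficient matrix `A`, the fundamental matrix `Φ` and its pointwise inverse `Φinv`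
    (A Φ Φinv : ℝ → (Euc n →L[ℝ] Euc n))
    (hA : ContinuousOn A (Set.Ici 0))
    (hΦ0 : Φ 0 = 1)
    (hΦode : ∀ t ∈ Set.Ici (0:ℝ), HasDerivWithinAt Φ (A t ∘L Φ t) (Set.Ici 0) t)
    (hΦinv : ∀ t ∈ Set.Ici (0:ℝ), Φ t ∘L Φinv t = 1 ∧ Φinv t ∘L Φ t = 1)
    -- the bounded linear boundary operator `Γ` and the matrix `Λ`, whose columns are `Γ(Φᵢ)`
    (Γ : Cb n →L[ℝ] Euc n)
    (ΦC : Euc n → Cb n) (hΦC : ∀ (v : Euc n) (t : Set.Ici (0:ℝ)), ΦC v t = Φ t v)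
    (Λ : Euc n →L[ℝ] Euc n) (hΛ : ∀ v, Λ v = Γ (ΦC v))
    -- `Λ` is invertible, with inverse `Λi`
    (Λi : Euc n →L[ℝ] Euc n) (hΛi : Λ ∘L Λi = 1 ∧ Λi ∘L Λ = 1)
    -- the data: `ψ ∈ 𝒞`, `w ∈ ℝⁿ`, and the function `Φ(·)∫₀· Φ⁻¹(s)ψ(s) ds ∈ 𝒞`
    (ψC : Cb n) (w : Euc n)
    (Tψ : Cb n)
    (hTψ : ∀ t : Set.Ici (0:ℝ),
      Tψ t = Φ t (∫ s in (0:ℝ)..(t:ℝ), Φinv s (ψC (Set.projIci 0 s)))) :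
    -- there is a unique solution `xC ∈ 𝒞` of the BVP, with `x(0) = Λ⁻¹[w − Γ(Φ(·)∫₀·Φ⁻¹ψ)]`
    ∃ xC : Cb n,
      ((∃ xe : ℝ → Euc n, (∀ t : Set.Ici (0:ℝ), xC t = xe t) ∧
          ∀ t ∈ Set.Ici (0:ℝ),
            HasDerivWithinAt xe (A t (xe t) + ψC (Set.projIci 0 t)) (Set.Ici 0) t) ∧
        Γ xC = w) ∧
      (∀ yC : Cb n,
        ((∃ ye : ℝ → Euc n, (∀ t : Set.Ici (0:ℝ), yC t = ye t) ∧
            ∀ t ∈ Set.Ici (0:ℝ),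
              HasDerivWithinAt ye (A t (ye t) + ψC (Set.projIci 0 t)) (Set.Ici 0) t) ∧
          Γ yC = w) → yC = xC) ∧
      xC ⟨0, Set.self_mem_Ici⟩ = Λi (w - Γ Tψ) := by
  set ψ : ℝ → Euc n := fun t => ψC (Set.projIci 0 t)
  set G : ℝ → Euc n := fun t => ∫ s in (0:ℝ)..t, Φinv s (ψ s)
  have hG : ∀ t ∈ Ici (0:ℝ), HasDerivWithinAt G (Φinv t (ψ t)) (Ici 0) t :=
    fun t => hasDerivWithinAt_integral_of_continuousOn_Ici <|
      (ContinuousOn.of_mul_eq_one (fun t ht => (hΦode t ht).continuousWithinAt) hΦinv).clm_apply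
        (ψC.continuous.comp ((continuous_const.max continuous_id).subtype_mk _)).continuousOn
  have hsol (c : Euc n) : ∀ t ∈ Ici (0:ℝ),
      HasDerivWithinAt (fun u => Φ u (c + G u)) (A t (Φ t (c + G t)) + ψ t) (Ici 0) t :=
    fun t ht => hasDerivWithinAt_variation_of_constants (hΦode t ht) (hG t ht) (hΦinv t ht).1 c
  have hval (c : Euc n) (t : Ici (0:ℝ)) : (ΦC c + Tψ) t = Φ t (c + G t) := by
    rw [BoundedContinuousFunction.add_apply, hΦC, hTψ, map_add]
  have hG0 (c : Euc n) : Φ 0 (c + G 0) = c := by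
    simp only [G, intervalIntegral.integral_same, add_zero, hΦ0, one_apply_eq_self]
  have hrepr (yC : Cb n) (ye : ℝ → Euc n) (hyC : ∀ t : Ici (0:ℝ), yC t = ye t)
      (hye : ∀ t ∈ Ici (0:ℝ), HasDerivWithinAt ye (A t (ye t) + ψ t) (Ici 0) t) :
      yC = ΦC (ye 0) + Tψ := by
    have heq := eqOn_Ici_of_hasDerivWithinAt_linear hA hye (hsol (ye 0)) (hG0 (ye 0)).symm
    ext1 t
    rw [hyC, heq t.2, hval]
  have hΓ (c : Euc n) : Γ (ΦC c + Tψ) = w ↔ c = Λi (w - Γ Tψ) := by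
    rw [map_add, ← hΛ, ← eq_sub_iff_add_eq]
    exact ⟨fun h => by rw [← h, ← ContinuousLinearMap.comp_apply, hΛi.2, one_apply_eq_self],
      fun h => by rw [h, ← ContinuousLinearMap.comp_apply, hΛi.1, one_apply_eq_self]⟩
  refine ⟨ΦC (Λi (w - Γ Tψ)) + Tψ, ⟨⟨_, hval _, hsol _⟩, (hΓ _).2 rfl⟩, ?_, ?_⟩
  · rintro yC ⟨⟨ye, hyC, hye⟩, hΓy⟩
    rw [hrepr yC ye hyC hye] at hΓy ⊢
    rw [← (hΓ _).1 hΓy]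
  · rw [hval, hG0]

theorem stmt_3 {n : ℕ} (hn : 1 ≤ n)
    -- the coefficient matrix `A`, the fundamental matrix `Φ` and its pointwise inverse `Φinv`
    (A Φ Φinv : ℝ → (Euc n →L[ℝ] Euc n))
    (hA : ContinuousOn A (Set.Ici 0))
    (hΦ0 : Φ 0 = 1)
    (hΦode : ∀ t ∈ Set.Ici (0:ℝ), HasDerivWithinAt Φ (A t ∘L Φ t) (Set.Ici 0) t)
    (hΦinv : ∀ t ∈ Set.Ici (0:ℝ), Φ t ∘L Φinv t = 1 ∧ Φinv t ∘L Φ t = 1)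
    -- condition guaranteeing `Φ(·)∫₀· Φ⁻¹(s)ψ(s) ds ∈ 𝒞`
    (K α : ℝ) (hK : 0 < K) (hα : 0 < α)
    (hKα : ∀ s t : ℝ, 0 ≤ s → s ≤ t → ‖Φ t ∘L Φinv s‖ ≤ K * Real.exp (-α * (t - s)))
    -- the bounded linear boundary operator `Γ` and the matrix `Λ`, whose columns are `Γ(Φᵢ)`
    (Γ : Cb n →L[ℝ] Euc n)
    (ΦC : Euc n → Cb n) (hΦC : ∀ (v : Euc n) (t : Set.Ici (0:ℝ)), ΦC v t = Φ t v)
    (Λ : Euc n →L[ℝ] Euc n) (hΛ : ∀ v, Λ v = Γ (ΦC v))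
    -- `Λ` is invertible, with inverse `Λi`
    (Λi : Euc n →L[ℝ] Euc n) (hΛi : Λ ∘L Λi = 1 ∧ Λi ∘L Λ = 1)
    -- the data: `ψ ∈ 𝒞`, `w ∈ ℝⁿ`, and the function `Φ(·)∫₀· Φ⁻¹(s)ψ(s) ds ∈ 𝒞`
    (ψC : Cb n) (w : Euc n)
    (Tψ : Cb n)
    (hTψ : ∀ t : Set.Ici (0:ℝ),
      Tψ t = Φ t (∫ s in (0:ℝ)..(t:ℝ), Φinv s (ψC (Set.projIci 0 s)))) :
    -- there is a unique solution `xC ∈ 𝒞` of the BVP, with `x(0) = Λ⁻¹[w − Γ(Φ(·)∫₀·Φ⁻¹ψ)]`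
    ∃ xC : Cb n,
      ((∃ xe : ℝ → Euc n, (∀ t : Set.Ici (0:ℝ), xC t = xe t) ∧
          ∀ t ∈ Set.Ici (0:ℝ),
            HasDerivWithinAt xe (A t (xe t) + ψC (Set.projIci 0 t)) (Set.Ici 0) t) ∧
        Γ xC = w) ∧
      (∀ yC : Cb n,
        ((∃ ye : ℝ → Euc n, (∀ t : Set.Ici (0:ℝ), yC t = ye t) ∧
            ∀ t ∈ Set.Ici (0:ℝ),
              HasDerivWithinAt ye (A t (ye t) + ψC (Set.projIci 0 t)) (Set.Ici 0) t) ∧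
          Γ yC = w) → yC = xC) ∧
      xC ⟨0, Set.self_mem_Ici⟩ = Λi (w - Γ Tψ) :=
  stmt_3_general A Φ Φinv hA hΦ0 hΦode hΦinv Γ ΦC hΦC Λ hΛ Λi hΛi ψC w Tψ hTψ
end
end

section
/- Suppose conditions (I)–(V) hold, y ∈ ker(Λ), and the linear map φ : ker(Λ) → ℝᵖ defined by φ(w) = Wᵀ[ ∫₀^∞ (∂g/∂x)(t,x_y(t))Φ(t) dt − Γ( Φ(·)∫₀· Φ⁻¹(s)(∂f/∂x)(s,x_y(s))Φ(s) ds ) ] w is a bijection from ker(Λ) onto ℝᵖ. Then the partial Fréchet derivative ∂H/∂(x,v) of H = (H₁,H₂) with respect to (x,v) at the point ((x_y, y), 0) is a bijection from 𝒞 × ker(Λ) onto 𝒞 × ℝᵖ. -/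
/-!
The derivative has the triangular form `(ψ, w) ↦ (ψ - Φ(·)w, L ψ)` with `L` linear, and
`L (Φ(·)w) = φ(w)`. Substituting `ψ = χ + Φ(·)w` turns `D(ψ, w) = (χ, z)` into `L χ + φ(w) = z`,
which has exactly one solution `w` because `φ` is bijective.
-/

open MeasureTheory Set RealInnerProductSpace

noncomputable section

theorem bijective_fst_sub_prod_map_of_bijective_comp {V E G : Type*}
    [AddCommGroup V] [AddCommGroup E] [AddCommGroup G] (j : V →+ E) (L : E →+ G)
    (hLj : Function.Bijective (L ∘ j)) :
    Function.Bijective fun q : E × V => (q.1 - j q.2, L q.1) := by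
  constructor
  · rintro ⟨ψ, w⟩ ⟨ψ', w'⟩ heq
    obtain ⟨hfst, hsnd⟩ : ψ - j w = ψ' - j w' ∧ L ψ = L ψ' := Prod.mk.inj heq
    have hLjw : L (j w) = L (j w') := by
      have h := congrArg L hfst
      rw [map_sub, map_sub, hsnd] at h
      exact sub_right_injective h
    obtain rfl : w = w' := hLj.1 hLjw
    rw [sub_left_injective hfst]
  · rintro ⟨χ, z⟩
    obtain ⟨w, hw⟩ := hLj.2 (z - L χ)
    refine ⟨(χ + j w, w), ?_⟩
    simp only [Function.comp_apply] at hw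
    simp [hw]

theorem stmt_11_general {n : ℕ}
    -- the coefficient matrix `A`, the fundamental matrix `Φ` and its pointwise inverse `Φinv`
    (Φ Φinv : ℝ → (Euc n →L[ℝ] Euc n))
    -- the bounded linear boundary operator `Γ` and the matrix `Λ`, whose columns are `Γ(Φᵢ)`
    (Γ : Cb n →L[ℝ] Euc n)
    (ΦC : Euc n → Cb n) (hΦC : ∀ (v : Euc n) (t : Set.Ici (0:ℝ)), ΦC v t = Φ t v)
    (Λ : Euc n →L[ℝ] Euc n)
    -- `p = dim ker Λ ≥ 1`, the columns of `W` form a basis of `ker (Λᵀ)`, and `Wᵀ` is the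
    -- induced linear map `ℝⁿ → ℝᵖ`, `(Wᵀz)ᵢ = ⟪Wᵢ, z⟫`
    (p : ℕ)
    (WT : Euc n →L[ℝ] Euc p)
    (f g : ℝ → Euc n → Euc n)
    (xyC : Cb n)
    -- `Tfd x ψ = Φ(·)∫₀· Φ⁻¹(s) (∂f/∂x)(s,x(s))ψ(s) ds ∈ 𝒞`
    (Tfd : Cb n → Cb n → Cb n)
    (hTfd : ∀ (x ψ : Cb n) (t : Set.Ici (0:ℝ)),
      Tfd x ψ t = Φ t (∫ s in (0:ℝ)..(t:ℝ),
        Φinv s (fderiv ℝ (f s) (x (Set.projIci 0 s)) (ψ (Set.projIci 0 s)))))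
    -- `TfdΦ w = Φ(·)∫₀· Φ⁻¹(s) (∂f/∂x)(s,x_y(s)) Φ(s) w ds ∈ 𝒞`
    (TfdΦ : Euc n → Cb n)
    (hTfdΦ : ∀ (w : Euc n) (t : Set.Ici (0:ℝ)),
      TfdΦ w t = Φ t (∫ s in (0:ℝ)..(t:ℝ),
        Φinv s (fderiv ℝ (f s) (xyC (Set.projIci 0 s)) (Φ s w))))
    -- the linear map `φ : ker(Λ) → ℝᵖ` is a bijection onto `ℝᵖ`
    (hφbij : Function.Bijective fun w : ↥(LinearMap.ker (Λ : Euc n →ₗ[ℝ] Euc n)) =>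
      WT ((∫ t in Set.Ici (0:ℝ),
          fderiv ℝ (g t) (xyC (Set.projIci 0 t)) (Φ t (w : Euc n))) -
        Γ (TfdΦ (w : Euc n)))) :
    -- then the partial derivative `∂H/∂(x,v)((x_y,y),0)` is a bijection of `𝒞 × ker(Λ)`
    -- onto `𝒞 × ℝᵖ`
    ∀ D : (Cb n × ↥(LinearMap.ker (Λ : Euc n →ₗ[ℝ] Euc n))) →L[ℝ] (Cb n × Euc p),
      (∀ (ψ : Cb n) (w : ↥(LinearMap.ker (Λ : Euc n →ₗ[ℝ] Euc n))),
        (∀ t : Set.Ici (0:ℝ), (D (ψ, w)).1 t = ψ t - Φ t (w : Euc n)) ∧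
        (D (ψ, w)).2 =
          WT ((∫ t in Set.Ici (0:ℝ),
              fderiv ℝ (g t) (xyC (Set.projIci 0 t)) (ψ (Set.projIci 0 t))) -
            Γ (Tfd xyC ψ))) →
      Function.Bijective D := by
  intro D hD
  have hΦC_proj (v : Euc n) {s : ℝ} (hs : 0 ≤ s) : ΦC v (Set.projIci 0 s) = Φ s v := by
    rw [hΦC, Set.projIci_of_mem hs]
  let j : LinearMap.ker (Λ : Euc n →ₗ[ℝ] Euc n) →+ Cb n :=
    { toFun := fun w => ΦC w
      map_zero' := by ext t; simp [hΦC]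
      map_add' := fun w w' => by ext t; simp [hΦC] }
  let L : Cb n →+ Euc p :=
    ((ContinuousLinearMap.snd ℝ _ _).comp (D.comp (ContinuousLinearMap.inl ℝ _ _))).toLinearMap
  have hD_eq : ⇑D = fun q => (q.1 - j q.2, L q.1) := by
    funext ⟨ψ, w⟩
    refine Prod.ext ?_ ((hD ψ w).2.trans (hD ψ 0).2.symm)
    ext t
    simp [(hD ψ w).1 t, j, hΦC]
  have hTfd_ΦC (v : Euc n) : Tfd xyC (ΦC v) = TfdΦ v := by
    ext1 t
    rw [hTfd, hTfdΦ]
    congr 1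
    refine intervalIntegral.integral_congr fun s hs => ?_
    rw [Set.uIcc_of_le t.2] at hs
    simp only [hΦC_proj v hs.1]
  have hLj : ⇑L ∘ ⇑j = fun w : LinearMap.ker (Λ : Euc n →ₗ[ℝ] Euc n) =>
      WT ((∫ t in Set.Ici (0:ℝ), fderiv ℝ (g t) (xyC (Set.projIci 0 t)) (Φ t (w : Euc n))) -
        Γ (TfdΦ (w : Euc n))) := by
    funext w
    change (D (ΦC w, 0)).2 = _
    rw [(hD _ _).2, hTfd_ΦC]
    congr 2
    exact setIntegral_congr_fun measurableSet_Ici fun t ht => by simp only [hΦC_proj _ ht]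
  rw [hD_eq]
  exact bijective_fst_sub_prod_map_of_bijective_comp j L (hLj ▸ hφbij)

theorem stmt_11 {n : ℕ} (hn : 1 ≤ n)
    -- the coefficient matrix `A`, the fundamental matrix `Φ` and its pointwise inverse `Φinv`
    (A Φ Φinv : ℝ → (Euc n →L[ℝ] Euc n))
    (hA : ContinuousOn A (Set.Ici 0))
    (hΦ0 : Φ 0 = 1)
    (hΦode : ∀ t ∈ Set.Ici (0:ℝ), HasDerivWithinAt Φ (A t ∘L Φ t) (Set.Ici 0) t)
    (hΦinv : ∀ t ∈ Set.Ici (0:ℝ), Φ t ∘L Φinv t = 1 ∧ Φinv t ∘L Φ t = 1)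
    -- condition guaranteeing `Φ(·)∫₀· Φ⁻¹(s)ψ(s) ds ∈ 𝒞`
    (K α : ℝ) (hK : 0 < K) (hα : 0 < α)
    (hKα : ∀ s t : ℝ, 0 ≤ s → s ≤ t → ‖Φ t ∘L Φinv s‖ ≤ K * Real.exp (-α * (t - s)))
    -- the bounded linear boundary operator `Γ` and the matrix `Λ`, whose columns are `Γ(Φᵢ)`
    (Γ : Cb n →L[ℝ] Euc n)
    (ΦC : Euc n → Cb n) (hΦC : ∀ (v : Euc n) (t : Set.Ici (0:ℝ)), ΦC v t = Φ t v)
    (Λ : Euc n →L[ℝ] Euc n) (hΛ : ∀ v, Λ v = Γ (ΦC v))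
    -- `p = dim ker Λ ≥ 1`, the columns of `W` form a basis of `ker (Λᵀ)`, and `Wᵀ` is the
    -- induced linear map `ℝⁿ → ℝᵖ`, `(Wᵀz)ᵢ = ⟪Wᵢ, z⟫`
    (p : ℕ) (hp : 1 ≤ p)
    (hfinrank : Module.finrank ℝ (LinearMap.ker (Λ : Euc n →ₗ[ℝ] Euc n)) = p)
    (W : Fin p → Euc n)
    (hWmem : ∀ i, W i ∈ LinearMap.ker (ContinuousLinearMap.adjoint Λ : Euc n →ₗ[ℝ] Euc n))
    (hWli : LinearIndependent ℝ W)
    (hWspan : Submodule.span ℝ (Set.range W) = LinearMap.ker (ContinuousLinearMap.adjoint Λ : Euc n →ₗ[ℝ] Euc n))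
    (WT : Euc n →L[ℝ] Euc p) (hWT : ∀ z i, WT z i = ⟪W i, z⟫)
    -- `f` and `g` are continuously differentiable
    (f g : ℝ → Euc n → Euc n)
    (hf : ContDiff ℝ 1 fun q : ℝ × Euc n => f q.1 q.2)
    (hg : ContDiff ℝ 1 fun q : ℝ × Euc n => g q.1 q.2)
    -- condition (II)
    (hIIa : ∀ S : Set (Euc n), IsCompact S →
      UniformContinuousOn (fun q : ℝ × Euc n => fderiv ℝ (f q.1) q.2) (Set.Ici 0 ×ˢ S))
    (hIIb : ∃ M, ∀ t ≥ (0:ℝ), ‖fderiv ℝ (f t) 0‖ ≤ M)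
    -- condition (III)
    (hIIIa : ∀ S : Set (Euc n), IsCompact S →
      UniformContinuousOn (fun q : ℝ × Euc n => fderiv ℝ (g q.1) q.2) (Set.Ici 0 ×ˢ S))
    (hIIIb : IntegrableOn (fun t => ‖fderiv ℝ (g t) 0‖) (Set.Ici 0))
    -- condition (IV)
    (hIV : ∀ x : Cb n, IntegrableOn (fun t => g t (x (Set.projIci 0 t))) (Set.Ici 0))
    -- condition (V)
    (hV : ∃ sfun : ℝ → ℝ, IntegrableOn sfun (Set.Ici 0) ∧
      ∀ t ≥ (0:ℝ), ∀ x₁ x₂ : Euc n,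
        ‖fderiv ℝ (g t) x₁ - fderiv ℝ (g t) x₂‖ ≤ sfun t * ‖x₁ - x₂‖)
    -- `h ∈ 𝒞`
    (h : Cb n)
    -- `y ∈ ker Λ` and `x_y = Φ(·)y + Φ(·)∫₀· Φ⁻¹(s)h(s) ds ∈ 𝒞`
    (y : ↥(LinearMap.ker (Λ : Euc n →ₗ[ℝ] Euc n))) (xyC : Cb n)
    (hxyC : ∀ t : Set.Ici (0:ℝ), xyC t = Φ t (y : Euc n) +
      Φ t (∫ s in (0:ℝ)..(t:ℝ), Φinv s (h (Set.projIci 0 s))))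
    -- `Tfd x ψ = Φ(·)∫₀· Φ⁻¹(s) (∂f/∂x)(s,x(s))ψ(s) ds ∈ 𝒞`
    (Tfd : Cb n → Cb n → Cb n)
    (hTfd : ∀ (x ψ : Cb n) (t : Set.Ici (0:ℝ)),
      Tfd x ψ t = Φ t (∫ s in (0:ℝ)..(t:ℝ),
        Φinv s (fderiv ℝ (f s) (x (Set.projIci 0 s)) (ψ (Set.projIci 0 s)))))
    -- `TfdΦ w = Φ(·)∫₀· Φ⁻¹(s) (∂f/∂x)(s,x_y(s)) Φ(s) w ds ∈ 𝒞`
    (TfdΦ : Euc n → Cb n)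
    (hTfdΦ : ∀ (w : Euc n) (t : Set.Ici (0:ℝ)),
      TfdΦ w t = Φ t (∫ s in (0:ℝ)..(t:ℝ),
        Φinv s (fderiv ℝ (f s) (xyC (Set.projIci 0 s)) (Φ s w))))
    -- the linear map `φ : ker(Λ) → ℝᵖ` is a bijection onto `ℝᵖ`
    (hφbij : Function.Bijective fun w : ↥(LinearMap.ker (Λ : Euc n →ₗ[ℝ] Euc n)) =>
      WT ((∫ t in Set.Ici (0:ℝ),
          fderiv ℝ (g t) (xyC (Set.projIci 0 t)) (Φ t (w : Euc n))) -
        Γ (TfdΦ (w : Euc n)))) :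
    -- then the partial derivative `∂H/∂(x,v)((x_y,y),0)` is a bijection of `𝒞 × ker(Λ)`
    -- onto `𝒞 × ℝᵖ`
    ∀ D : (Cb n × ↥(LinearMap.ker (Λ : Euc n →ₗ[ℝ] Euc n))) →L[ℝ] (Cb n × Euc p),
      (∀ (ψ : Cb n) (w : ↥(LinearMap.ker (Λ : Euc n →ₗ[ℝ] Euc n))),
        (∀ t : Set.Ici (0:ℝ), (D (ψ, w)).1 t = ψ t - Φ t (w : Euc n)) ∧
        (D (ψ, w)).2 =
          WT ((∫ t in Set.Ici (0:ℝ),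
              fderiv ℝ (g t) (xyC (Set.projIci 0 t)) (ψ (Set.projIci 0 t))) -
            Γ (Tfd xyC ψ))) →
      Function.Bijective D :=
  stmt_11_general Φ Φinv Γ ΦC hΦC Λ p WT f g xyC Tfd hTfd TfdΦ hTfdΦ hφbij
end
end

section
/- Suppose conditions (I') and (VII') hold. Then for all x, ψ ∈ 𝒞, the function t ↦ Φ(t)∫₀ᵗ Φ⁻¹(s)[ f(s, x(s)+ψ(s)) − f(s, x(s)) − (∂f/∂x)(s, x(s)) ψ(s) ] ds has supremum norm over t ∈ [0,∞) at most K ‖h₂‖_{L¹} ‖ψ‖∞², where ‖h₂‖_{L¹} = ∫₀^∞ |h₂(t)| dt. -/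
open MeasureTheory Set

noncomputable section

/-! A Lipschitz bound on `∂f/∂x` makes the integrand quadratically small: by the mean value
inequality its norm is at most `|h₂(s)| ‖ψ‖∞²`. Condition (I') bounds `‖Φ(t)Φ⁻¹(s)‖` by `K`, and
integrating over `[0, t] ⊆ [0, ∞)` gives `K ‖h₂‖_{L¹} ‖ψ‖∞²`. -/

theorem norm_image_add_sub_sub_fderiv_le {E F : Type*} [NormedAddCommGroup E] [NormedSpace ℝ E]
    [NormedAddCommGroup F] [NormedSpace ℝ F] {f : E → F} (hf : Differentiable ℝ f) {C : ℝ}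
    (hC : 0 ≤ C) (hlip : ∀ x₁ x₂, ‖fderiv ℝ f x₁ - fderiv ℝ f x₂‖ ≤ C * ‖x₁ - x₂‖) (a b : E) :
    ‖f (a + b) - f a - fderiv ℝ f a b‖ ≤ C * ‖b‖ ^ 2 := by
  have hmem : a + b ∈ Metric.closedBall a ‖b‖ := by simp
  have key := (convex_closedBall a ‖b‖).norm_image_sub_le_of_norm_fderiv_le'
    (fun y _ => hf y) (fun y hy => (hlip y a).trans (mul_le_mul_of_nonneg_left
      (mem_closedBall_iff_norm.mp hy) hC)) (Metric.mem_closedBall_self (norm_nonneg b)) hmem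
  rw [add_sub_cancel_left] at key
  linarith

theorem norm_intervalIntegral_le_mul_integral_Ici_abs {E : Type*} [NormedAddCommGroup E]
    [NormedSpace ℝ E] {g : ℝ → E} {h : ℝ → ℝ} {a t c : ℝ} (hat : a ≤ t) (hc : 0 ≤ c)
    (hh : IntegrableOn h (Ici a)) (hg : ∀ s ∈ Ioc a t, ‖g s‖ ≤ c * |h s|) :
    ‖∫ s in a..t, g s‖ ≤ c * ∫ s in Ici a, |h s| := by
  have hsub : Ioc a t ⊆ Ici a := Ioc_subset_Icc_self.trans Icc_subset_Ici_self
  calc ‖∫ s in a..t, g s‖ ≤ ∫ s in a..t, c * |h s| :=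
        intervalIntegral.norm_integral_le_of_norm_le hat (ae_of_all _ hg)
          (((intervalIntegrable_iff_integrableOn_Ioc_of_le hat).mpr
            ((hh.mono_set hsub).abs)).const_mul c)
    _ = c * ∫ s in Ioc a t, |h s| := by
        rw [intervalIntegral.integral_of_le hat, integral_const_mul]
    _ ≤ c * ∫ s in Ici a, |h s| :=
        mul_le_mul_of_nonneg_left (setIntegral_mono_set hh.abs
          (ae_of_all _ fun s => abs_nonneg _) (ae_of_all _ hsub)) hc

theorem stmt_15_general {n : ℕ}
    -- the coefficient matrix `A`, the fundamental matrix `Φ` and its pointwise inverse `Φinv`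
    (Φ Φinv : ℝ → (Euc n →L[ℝ] Euc n))
    -- condition (I'): `‖Φ(t)Φ⁻¹(s)‖ ≤ K` for all `t ≥ s ≥ 0`
    (K : ℝ)
    (hKb : ∀ s t : ℝ, 0 ≤ s → s ≤ t → ‖Φ t ∘L Φinv s‖ ≤ K)
    -- `f` is continuously differentiable in its second (ℝⁿ) variable
    (f : ℝ → Euc n → Euc n) (hf : ∀ t, ContDiff ℝ 1 (f t))
    -- condition (VII'): an integrable Lipschitz-type bound `h₂` for `∂f/∂x`
    (h₂ : ℝ → ℝ) (hh₂int : IntegrableOn h₂ (Set.Ici 0))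
    (hh₂ : ∀ t ≥ (0:ℝ), ∀ x₁ x₂ : Euc n,
      ‖fderiv ℝ (f t) x₁ - fderiv ℝ (f t) x₂‖ ≤ h₂ t * ‖x₁ - x₂‖) :
    -- the sup-norm bound `K ‖h₂‖_{L¹} ‖ψ‖∞²` holds
    ∀ x ψ : Cb n, ∀ t ≥ (0:ℝ),
      ‖Φ t (∫ s in (0:ℝ)..t, Φinv s
          (f s (x (Set.projIci 0 s) + ψ (Set.projIci 0 s)) - f s (x (Set.projIci 0 s)) -
            fderiv ℝ (f s) (x (Set.projIci 0 s)) (ψ (Set.projIci 0 s))))‖ ≤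
        K * (∫ s in Set.Ici (0:ℝ), |h₂ s|) * ‖ψ‖ ^ 2 := by
  intro x ψ t ht
  have hK : 0 ≤ K := (norm_nonneg _).trans (hKb 0 0 le_rfl le_rfl)
  set F : ℝ → Euc n := fun s =>
    f s (x (Set.projIci 0 s) + ψ (Set.projIci 0 s)) - f s (x (Set.projIci 0 s)) -
      fderiv ℝ (f s) (x (Set.projIci 0 s)) (ψ (Set.projIci 0 s))
  have hF_le : ∀ s ≥ (0:ℝ), ‖F s‖ ≤ |h₂ s| * ‖ψ‖ ^ 2 := fun s hs =>
    (norm_image_add_sub_sub_fderiv_le ((hf s).differentiable one_ne_zero) (abs_nonneg _)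
      (fun x₁ x₂ => (hh₂ s hs x₁ x₂).trans (by gcongr; exact le_abs_self _)) _ _).trans
      (by gcongr; exact ψ.norm_coe_le_norm _)
  have hintegrand : ∀ s ∈ Ioc 0 t, ‖Φ t (Φinv s (F s))‖ ≤ K * ‖ψ‖ ^ 2 * |h₂ s| := fun s hs =>
    calc ‖(Φ t ∘L Φinv s) (F s)‖ ≤ ‖Φ t ∘L Φinv s‖ * ‖F s‖ := (Φ t ∘L Φinv s).le_opNorm _
      _ ≤ K * (|h₂ s| * ‖ψ‖ ^ 2) := mul_le_mul (hKb s t hs.1.le hs.2) (hF_le s hs.1.le)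
          (norm_nonneg _) hK
      _ = K * ‖ψ‖ ^ 2 * |h₂ s| := by ring
  by_cases hg : IntervalIntegrable (fun s => Φinv s (F s)) volume 0 t
  · rw [← (Φ t).intervalIntegral_comp_comm hg]
    have := norm_intervalIntegral_le_mul_integral_Ici_abs ht (by positivity) hh₂int hintegrand
    linarith
  · -- a non-integrable integrand has Bochner integral `0`
    rw [intervalIntegral.integral_undef hg, map_zero, norm_zero]
    have : 0 ≤ ∫ s in Ici (0:ℝ), |h₂ s| := integral_nonneg fun s => abs_nonneg _
    positivity

theorem stmt_15 {n : ℕ} (hn : 1 ≤ n)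
    -- the coefficient matrix `A`, the fundamental matrix `Φ` and its pointwise inverse `Φinv`
    (A Φ Φinv : ℝ → (Euc n →L[ℝ] Euc n))
    (hA : ContinuousOn A (Set.Ici 0))
    (hΦ0 : Φ 0 = 1)
    (hΦode : ∀ t ∈ Set.Ici (0:ℝ), HasDerivWithinAt Φ (A t ∘L Φ t) (Set.Ici 0) t)
    (hΦinv : ∀ t ∈ Set.Ici (0:ℝ), Φ t ∘L Φinv t = 1 ∧ Φinv t ∘L Φ t = 1)
    -- condition (I'): `‖Φ(t)Φ⁻¹(s)‖ ≤ K` for all `t ≥ s ≥ 0`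
    (K : ℝ) (hK : 0 < K)
    (hKb : ∀ s t : ℝ, 0 ≤ s → s ≤ t → ‖Φ t ∘L Φinv s‖ ≤ K)
    -- `f` is continuously differentiable in its second (ℝⁿ) variable
    (f : ℝ → Euc n → Euc n) (hf : ∀ t, ContDiff ℝ 1 (f t))
    -- condition (VII'): an integrable Lipschitz-type bound `h₂` for `∂f/∂x`
    (h₂ : ℝ → ℝ) (hh₂int : IntegrableOn h₂ (Set.Ici 0))
    (hh₂ : ∀ t ≥ (0:ℝ), ∀ x₁ x₂ : Euc n,
      ‖fderiv ℝ (f t) x₁ - fderiv ℝ (f t) x₂‖ ≤ h₂ t * ‖x₁ - x₂‖) :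
    -- the sup-norm bound `K ‖h₂‖_{L¹} ‖ψ‖∞²` holds
    ∀ x ψ : Cb n, ∀ t ≥ (0:ℝ),
      ‖Φ t (∫ s in (0:ℝ)..t, Φinv s
          (f s (x (Set.projIci 0 s) + ψ (Set.projIci 0 s)) - f s (x (Set.projIci 0 s)) -
            fderiv ℝ (f s) (x (Set.projIci 0 s)) (ψ (Set.projIci 0 s))))‖ ≤
        K * (∫ s in Set.Ici (0:ℝ), |h₂ s|) * ‖ψ‖ ^ 2 :=
  stmt_15_general Φ Φinv K hKb f hf h₂ hh₂int hh₂
end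
end

section
/- Suppose conditions (I')–(VII') hold and h ∈ 𝒞 ∩ L¹([0,∞)). Then the map H = (H₁, H₂) : 𝒞 × ker(Λ) × ℝ → 𝒞 × ℝᵖ is continuously Fréchet differentiable, and for every ((x,v),ε) its partial Fréchet derivative with respect to (x,v) is the bounded linear map sending (ψ,w) ∈ 𝒞 × ker(Λ) to the pair consisting of the function t ↦ ψ(t) − Φ(t)w − ε ( Φ(t)∫₀ᵗ Φ⁻¹(s)(∂f/∂x)(s,x(s))ψ(s) ds ) and the vector Wᵀ[ ∫₀^∞ (∂g/∂x)(t,x(t))ψ(t) dt − Γ( Φ(·)∫₀· Φ⁻¹(s)(∂f/∂x)(s,x(s))ψ(s) ds ) ]. -/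
open MeasureTheory Set RealInnerProductSpace

noncomputable section

/-!
Splitting the integral in `H₁` gives `H₁((x,v),ε) = x - Φ v + H₁((0,0),0) - ε Tf x` and
`H₂((x,v),ε) = Wᵀ (G x - Γ (Tf x))` with `Tf x = Φ(·)∫₀· Φ⁻¹(s) f(s, x(s)) ds` and
`G x = ∫₀^∞ g(t, x(t)) dt`, so it suffices that `Tf` and `G` are C¹ on `𝒞`.
For each fixed `t`, `Tf x t` and `G x` are integrals, against a kernel bounded by `K` (resp. `1`),
of `s ↦ F(s, x(s))`, where the derivative of `F(s, ·)` is `c(s)`-Lipschitz with `c ∈ L¹`.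
By the mean value inequality the pointwise Taylor remainder is at most `|c(s)| ‖y - x‖²`, so after
integration the remainder is `O(‖y - x‖²)` and the candidate derivative is Lipschitz in `x`: this
gives both the Fréchet derivative and its continuity. The derivative of `Tf` is assembled from its
evaluations at each `t`, which are continuous linear maps; the uniform boundedness principle makes
the assembled map continuous on `𝒞`.
-/

open Filter Asymptotics BoundedContinuousFunction

variable {E F G : Type*} [NormedAddCommGroup E] [NormedSpace ℝ E] [NormedAddCommGroup F]
  [NormedSpace ℝ F] [NormedAddCommGroup G] [NormedSpace ℝ G]

theorem continuous_projIci {α : Type*} [LinearOrder α] [TopologicalSpace α] [OrderTopology α]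
    {a : α} : Continuous (projIci a) :=
  Continuous.subtype_mk (by fun_prop) _

theorem ContinuousOn.of_pointwise_inverse {α R : Type*} [TopologicalSpace α] [NormedRing R]
    [HasSummableGeomSeries R] {Φ Ψ : α → R} {s : Set α} (hΦ : ContinuousOn Φ s)
    (hΦΨ : ∀ t ∈ s, Φ t * Ψ t = 1 ∧ Ψ t * Φ t = 1) : ContinuousOn Ψ s := by
  intro t ht
  let u : Rˣ := ⟨Φ t, Ψ t, (hΦΨ t ht).1, (hΦΨ t ht).2⟩
  have hinv : ContinuousAt Ring.inverse (Φ t) := NormedRing.inverse_continuousAt u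
  refine (hinv.comp_continuousWithinAt (hΦ t ht)).congr (fun s hs => ?_) ?_
  · exact (Ring.inverse_unit ⟨Φ s, Ψ s, (hΦΨ s hs).1, (hΦΨ s hs).2⟩).symm
  · exact (Ring.inverse_unit u).symm

theorem Set.Ioc_subset_Ici_self {α : Type*} [Preorder α] {a b : α} : Ioc a b ⊆ Ici a :=
  Ioc_subset_Icc_self.trans Icc_subset_Ici_self

theorem hasFDerivAt_of_norm_sub_le_sq {T : E → F} {L : E →L[ℝ] F} {x : E} {c : ℝ}
    (h : ∀ y, ‖T y - T x - L (y - x)‖ ≤ c * ‖y - x‖ ^ 2) : HasFDerivAt T L x := by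
  rw [hasFDerivAt_iff_isLittleO_nhds_zero]
  refine IsBigO.trans_isLittleO (g := fun h : E => ‖h‖ ^ 2) ?_ (isLittleO_norm_pow_id one_lt_two)
  refine IsBigO.of_bound c (Eventually.of_forall fun y => ?_)
  simpa using h (x + y)

theorem contDiff_one_of_norm_sub_le_sq {T : E → F} {L : E → E →L[ℝ] F} {c : ℝ}
    (hT : ∀ x y, ‖T y - T x - L x (y - x)‖ ≤ c * ‖y - x‖ ^ 2)
    (hL : ∀ x y, ‖L x - L y‖ ≤ c * ‖x - y‖) : ContDiff ℝ 1 T := by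
  have hTL x : HasFDerivAt T (L x) x := hasFDerivAt_of_norm_sub_le_sq (hT x)
  rw [contDiff_one_iff_fderiv, funext fun x => (hTL x).fderiv]
  exact ⟨fun x => (hTL x).differentiableAt,
    (LipschitzWith.of_dist_le' fun x y => by simpa only [dist_eq_norm] using hL x y).continuous⟩

theorem norm_sub_sub_fderiv_le {φ : E → F} (hφ : Differentiable ℝ φ) {c : ℝ}
    (hc : ∀ a b, ‖fderiv ℝ φ a - fderiv ℝ φ b‖ ≤ c * ‖a - b‖) (a b : E) :
    ‖φ b - φ a - fderiv ℝ φ a (b - a)‖ ≤ |c| * ‖b - a‖ ^ 2 := by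
  have hc' y : ‖fderiv ℝ φ y - fderiv ℝ φ a‖ ≤ |c| * ‖y - a‖ :=
    (hc y a).trans (by gcongr; exact le_abs_self c)
  have := Convex.norm_image_sub_le_of_norm_hasFDerivWithin_le' (φ := fderiv ℝ φ a)
    (C := |c| * ‖b - a‖) (fun y _ => (hφ y).hasFDerivAt.hasFDerivWithinAt)
    (fun y hy => (hc' y).trans ?_)
    (convex_closedBall a ‖b - a‖) (Metric.mem_closedBall_self (norm_nonneg _))
    (by rw [Metric.mem_closedBall, dist_eq_norm])
  · rwa [sq, ← mul_assoc]
  · rw [Metric.mem_closedBall, dist_eq_norm] at hy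
    gcongr

theorem ContDiff.continuous_fderiv_uncurry {f : E → F → G}
    (hf : ContDiff ℝ 1 (Function.uncurry f)) :
    Continuous fun q : E × F => fderiv ℝ (f q.1) q.2 :=
  (ContDiff.fderiv (f := fun q : E × F => f q.1) (hf.comp (contDiff_fst.prodMap contDiff_id))
    contDiff_snd (n := 0) le_rfl).continuous

theorem ContDiff.differentiable_uncurry_right {f : E → F → G}
    (hf : ContDiff ℝ 1 (Function.uncurry f)) (t : E) : Differentiable ℝ (f t) :=
  (hf.comp (contDiff_prodMk_right t)).differentiable one_ne_zero

theorem BoundedContinuousFunction.exists_clm_of_apply_eq {X α : Type*} [NormedAddCommGroup X]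
    [NormedSpace ℝ X] [CompleteSpace X] [TopologicalSpace α] {T : X → α →ᵇ E}
    {ℓ : α → X →L[ℝ] E} (hT : ∀ ψ z, T ψ z = ℓ z ψ) : ∃ L : X →L[ℝ] α →ᵇ E, ⇑L = T := by
  obtain ⟨C, hC⟩ := banach_steinhaus fun ψ => ⟨‖T ψ‖, fun z => hT ψ z ▸ norm_coe_le_norm (T ψ) z⟩
  refine ⟨LinearMap.mkContinuous
    { toFun := T
      map_add' := fun ψ φ => by ext z; simp [hT]
      map_smul' := fun r ψ => by ext z; simp [hT] }
    (max C 0) fun ψ => (norm_le (by positivity)).2 fun z => ?_, rfl⟩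
  rw [LinearMap.coe_mk, AddHom.coe_mk, hT]
  exact (ℓ z).le_of_opNorm_le ((hC z).trans (le_max_left _ _)) ψ

theorem BoundedContinuousFunction.continuous_comp_projIci {β : Type*} [PseudoMetricSpace β]
    (x : Ici (0:ℝ) →ᵇ β) : Continuous fun s => x (projIci 0 s) :=
  x.continuous.comp continuous_projIci

theorem BoundedContinuousFunction.norm_coe_sub_le {α β : Type*} [TopologicalSpace α]
    [SeminormedAddCommGroup β] (x y : α →ᵇ β) (z : α) : ‖x z - y z‖ ≤ ‖x - y‖ := by
  simpa using norm_coe_le_norm (x - y) z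

section KernelIntegral

variable {μ : Measure ℝ}

theorem integrable_apply_comp_projIci {A : ℝ → E →L[ℝ] F} (hA : Integrable A μ)
    (ψ : Ici (0:ℝ) →ᵇ E) : Integrable (fun s => A s (ψ (projIci 0 s))) μ :=
  Integrable.mono' (hA.norm.mul_const ‖ψ‖)
    ((ContinuousLinearMap.id ℝ _).aestronglyMeasurable_comp₂ hA.aestronglyMeasurable
      ψ.continuous_comp_projIci.aestronglyMeasurable)
    (ae_of_all _ fun s => (A s).le_opNorm_of_le (norm_coe_le_norm ψ _))

def kernelIntegralCLM (μ : Measure ℝ) (A : ℝ → E →L[ℝ] F) (hA : Integrable A μ) :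
    (Ici (0:ℝ) →ᵇ E) →L[ℝ] F :=
  LinearMap.mkContinuous
    { toFun := fun ψ => ∫ s, A s (ψ (projIci 0 s)) ∂μ
      map_add' := fun ψ φ => by
        simp only [coe_add, Pi.add_apply, map_add]
        exact integral_add (integrable_apply_comp_projIci hA ψ)
          (integrable_apply_comp_projIci hA φ)
      map_smul' := fun r ψ => by
        simp only [coe_smul, map_smul, RingHom.id_apply]
        exact integral_smul r _ }
    (∫ s, ‖A s‖ ∂μ) fun ψ => by
      rw [← integral_mul_const]
      exact norm_integral_le_of_norm_le (hA.norm.mul_const _)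
        (ae_of_all _ fun s => (A s).le_opNorm_of_le (norm_coe_le_norm ψ _))

theorem kernelIntegralCLM_apply {A : ℝ → E →L[ℝ] F} (hA : Integrable A μ) (ψ : Ici (0:ℝ) →ᵇ E) :
    kernelIntegralCLM μ A hA ψ = ∫ s, A s (ψ (projIci 0 s)) ∂μ :=
  rfl

theorem norm_kernelIntegralCLM_sub_le {A B : ℝ → E →L[ℝ] F} (hA : Integrable A μ)
    (hB : Integrable B μ) :
    ‖kernelIntegralCLM μ A hA - kernelIntegralCLM μ B hB‖ ≤ ∫ s, ‖A s - B s‖ ∂μ := by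
  refine ContinuousLinearMap.opNorm_le_bound _ (integral_nonneg fun s => norm_nonneg _)
    fun ψ => ?_
  rw [_root_.sub_apply, kernelIntegralCLM_apply, kernelIntegralCLM_apply,
    ← integral_sub (integrable_apply_comp_projIci hA ψ) (integrable_apply_comp_projIci hB ψ),
    ← integral_mul_const]
  exact norm_integral_le_of_norm_le ((hA.sub hB).norm.mul_const _)
    (ae_of_all _ fun s => (A s - B s).le_opNorm_of_le (norm_coe_le_norm ψ _))

end KernelIntegral

section Nemytskii

variable {μ : Measure ℝ} {f : ℝ → E → F} {κ : ℝ → F →L[ℝ] G} {c : ℝ → ℝ} {K : ℝ}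

theorem norm_fderiv_le_norm_fderiv_zero_add {φ : E → F} {c : ℝ}
    (hc : ∀ a b, ‖fderiv ℝ φ a - fderiv ℝ φ b‖ ≤ c * ‖a - b‖) (a : E) :
    ‖fderiv ℝ φ a‖ ≤ ‖fderiv ℝ φ 0‖ + |c| * ‖a‖ := by
  have h : ‖fderiv ℝ φ a - fderiv ℝ φ 0‖ ≤ |c| * ‖a‖ := by
    simpa using (hc a 0).trans (mul_le_mul_of_nonneg_right (le_abs_self c) (norm_nonneg _))
  linarith [norm_sub_norm_le (fderiv ℝ φ a) (fderiv ℝ φ 0)]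

theorem integrable_kernel_comp_fderiv (hf : ContDiff ℝ 1 (Function.uncurry f))
    (hκ : AEStronglyMeasurable κ μ) (hκK : ∀ᵐ s ∂μ, ‖κ s‖ ≤ K)
    (hf0 : Integrable (fun s => ‖fderiv ℝ (f s) 0‖) μ) (hc : Integrable c μ)
    (hfc : ∀ᵐ s ∂μ, ∀ a b, ‖fderiv ℝ (f s) a - fderiv ℝ (f s) b‖ ≤ c s * ‖a - b‖)
    (x : Ici (0:ℝ) →ᵇ E) :
    Integrable (fun s => κ s ∘L fderiv ℝ (f s) (x (projIci 0 s))) μ := by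
  refine Integrable.mono' ((hf0.add (hc.abs.mul_const ‖x‖)).const_mul K)
    ((ContinuousLinearMap.compL ℝ E F G).aestronglyMeasurable_comp₂ hκ
      (hf.continuous_fderiv_uncurry.comp
        (continuous_id.prodMk x.continuous_comp_projIci)).aestronglyMeasurable) ?_
  filter_upwards [hκK, hfc] with s hκs hfcs
  calc ‖κ s ∘L fderiv ℝ (f s) (x (projIci 0 s))‖
      ≤ ‖κ s‖ * ‖fderiv ℝ (f s) (x (projIci 0 s))‖ := ContinuousLinearMap.opNorm_comp_le _ _
    _ ≤ K * (‖fderiv ℝ (f s) 0‖ + |c s| * ‖x‖) := by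
      gcongr
      · exact (norm_nonneg _).trans hκs
      · exact (norm_fderiv_le_norm_fderiv_zero_add hfcs _).trans
          (by gcongr; exact norm_coe_le_norm x _)

theorem norm_integral_comp_sub_sub_le (hf : ContDiff ℝ 1 (Function.uncurry f))
    (hκK : ∀ᵐ s ∂μ, ‖κ s‖ ≤ K) (hc : Integrable c μ)
    (hfc : ∀ᵐ s ∂μ, ∀ a b, ‖fderiv ℝ (f s) a - fderiv ℝ (f s) b‖ ≤ c s * ‖a - b‖)
    (hfint : ∀ x : Ici (0:ℝ) →ᵇ E, Integrable (fun s => κ s (f s (x (projIci 0 s)))) μ)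
    {x : Ici (0:ℝ) →ᵇ E} (hA : Integrable (fun s => κ s ∘L fderiv ℝ (f s) (x (projIci 0 s))) μ)
    (y : Ici (0:ℝ) →ᵇ E) :
    ‖(∫ s, κ s (f s (y (projIci 0 s))) ∂μ) - (∫ s, κ s (f s (x (projIci 0 s))) ∂μ) -
        kernelIntegralCLM μ _ hA (y - x)‖ ≤ K * (∫ s, |c s| ∂μ) * ‖y - x‖ ^ 2 := by
  have hyx : Integrable (fun s => κ s (f s (y (projIci 0 s))) - κ s (f s (x (projIci 0 s)))) μ :=
    (hfint y).sub (hfint x)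
  rw [kernelIntegralCLM_apply, ← integral_sub (hfint y) (hfint x),
    ← integral_sub hyx (integrable_apply_comp_projIci hA _),
    mul_assoc, ← integral_mul_const, ← integral_const_mul]
  refine norm_integral_le_of_norm_le ((hc.abs.mul_const _).const_mul K) ?_
  filter_upwards [hκK, hfc] with s hκs hfcs
  have hK : 0 ≤ K := (norm_nonneg _).trans hκs
  have hrem := norm_sub_sub_fderiv_le (hf.differentiable_uncurry_right s) hfcs
    (x (projIci 0 s)) (y (projIci 0 s))
  calc _ = ‖κ s (f s (y (projIci 0 s)) - f s (x (projIci 0 s)) -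
          fderiv ℝ (f s) (x (projIci 0 s)) (y (projIci 0 s) - x (projIci 0 s)))‖ := by
        simp only [map_sub, ContinuousLinearMap.comp_apply, coe_sub, Pi.sub_apply]
    _ ≤ K * (|c s| * ‖y - x‖ ^ 2) := by
        refine (κ s).le_of_opNorm_le hκs _ |>.trans ?_
        gcongr
        exact hrem.trans (by gcongr; exact norm_coe_sub_le y x _)
    _ = _ := by ring

theorem norm_kernelIntegralCLM_comp_fderiv_sub_le
    (hκK : ∀ᵐ s ∂μ, ‖κ s‖ ≤ K) (hc : Integrable c μ)
    (hfc : ∀ᵐ s ∂μ, ∀ a b, ‖fderiv ℝ (f s) a - fderiv ℝ (f s) b‖ ≤ c s * ‖a - b‖)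
    {x y : Ici (0:ℝ) →ᵇ E}
    (hx : Integrable (fun s => κ s ∘L fderiv ℝ (f s) (x (projIci 0 s))) μ)
    (hy : Integrable (fun s => κ s ∘L fderiv ℝ (f s) (y (projIci 0 s))) μ) :
    ‖kernelIntegralCLM μ _ hx - kernelIntegralCLM μ _ hy‖ ≤ K * (∫ s, |c s| ∂μ) * ‖x - y‖ := by
  refine (norm_kernelIntegralCLM_sub_le hx hy).trans ?_
  rw [mul_assoc, ← integral_mul_const, ← integral_const_mul]
  refine integral_mono_ae (hx.sub hy).norm ((hc.abs.mul_const _).const_mul K) ?_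
  filter_upwards [hκK, hfc] with s hκs hfcs
  calc ‖κ s ∘L fderiv ℝ (f s) (x (projIci 0 s)) - κ s ∘L fderiv ℝ (f s) (y (projIci 0 s))‖
      = ‖κ s ∘L (fderiv ℝ (f s) (x (projIci 0 s)) - fderiv ℝ (f s) (y (projIci 0 s)))‖ := by
        rw [ContinuousLinearMap.comp_sub]
    _ ≤ K * (|c s| * ‖x - y‖) := by
        refine (ContinuousLinearMap.opNorm_comp_le _ _).trans ?_
        gcongr
        · exact (norm_nonneg _).trans hκs
        · exact (hfcs _ _).trans (by gcongr; exacts [le_abs_self _, norm_coe_sub_le x y _])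
    _ = _ := by ring

end Nemytskii

theorem contDiff_setIntegral_Ici_comp {g : ℝ → E → F} {c : ℝ → ℝ}
    (hg : ContDiff ℝ 1 (Function.uncurry g))
    (hg0 : IntegrableOn (fun t => ‖fderiv ℝ (g t) 0‖) (Ici 0)) (hc : IntegrableOn c (Ici 0))
    (hgc : ∀ t ≥ (0:ℝ), ∀ a b, ‖fderiv ℝ (g t) a - fderiv ℝ (g t) b‖ ≤ c t * ‖a - b‖)
    (hgint : ∀ x : Ici (0:ℝ) →ᵇ E, IntegrableOn (fun t => g t (x (projIci 0 t))) (Ici 0)) :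
    ContDiff ℝ 1 (fun x : Ici (0:ℝ) →ᵇ E => ∫ t in Ici 0, g t (x (projIci 0 t))) ∧
      ∀ x, ∃ L : (Ici (0:ℝ) →ᵇ E) →L[ℝ] F,
        (∀ ψ, L ψ = ∫ t in Ici 0, fderiv ℝ (g t) (x (projIci 0 t)) (ψ (projIci 0 t))) ∧
        HasFDerivAt (fun x : Ici (0:ℝ) →ᵇ E => ∫ t in Ici 0, g t (x (projIci 0 t))) L x := by
  have hid : ∀ᵐ t ∂volume.restrict (Ici (0:ℝ)), ‖ContinuousLinearMap.id ℝ F‖ ≤ 1 :=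
    ae_of_all _ fun _ => ContinuousLinearMap.norm_id_le
  have hgc' := ae_restrict_of_forall_mem (μ := volume) measurableSet_Ici hgc
  have hA := integrable_kernel_comp_fderiv hg aestronglyMeasurable_const hid hg0 hc hgc'
  have hrem x := norm_integral_comp_sub_sub_le hg hid hc hgc' hgint (hA x)
  exact ⟨contDiff_one_of_norm_sub_le_sq hrem
      fun x y => norm_kernelIntegralCLM_comp_fderiv_sub_le hid hc hgc' (hA x) (hA y),
    fun x => ⟨_, fun ψ => rfl, hasFDerivAt_of_norm_sub_le_sq (hrem x)⟩⟩

section Volterra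

variable {Φ Φinv : ℝ → F →L[ℝ] F} {K : ℝ}

theorem integrableOn_volterra (hΦinv : ContinuousOn Φinv (Ici 0)) {u : ℝ → F}
    (hu : Continuous u) (t : ℝ) :
    IntegrableOn (fun s => (Φ t ∘L Φinv s) (u s)) (Ioc 0 t) :=
  ((continuousOn_const.clm_comp (hΦinv.mono Icc_subset_Ici_self)).clm_apply
    hu.continuousOn).integrableOn_Icc.mono_set Ioc_subset_Icc_self

theorem integrable_volterraKernel_comp_fderiv (hΦinv : ContinuousOn Φinv (Ici 0))
    (hK : ∀ s t : ℝ, 0 ≤ s → s ≤ t → ‖Φ t ∘L Φinv s‖ ≤ K) {f : ℝ → E → F} {c : ℝ → ℝ}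
    (hf : ContDiff ℝ 1 (Function.uncurry f))
    (hf0 : IntegrableOn (fun s => ‖fderiv ℝ (f s) 0‖) (Ici 0)) (hc : IntegrableOn c (Ici 0))
    (hfc : ∀ s ≥ (0:ℝ), ∀ a b, ‖fderiv ℝ (f s) a - fderiv ℝ (f s) b‖ ≤ c s * ‖a - b‖)
    (t : ℝ) (x : Ici (0:ℝ) →ᵇ E) :
    IntegrableOn (fun s => (Φ t ∘L Φinv s) ∘L fderiv ℝ (f s) (x (projIci 0 s))) (Ioc 0 t) :=
  integrable_kernel_comp_fderiv hf
    ((continuousOn_const.clm_comp (hΦinv.mono Ioc_subset_Ici_self)).aestronglyMeasurable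
      measurableSet_Ioc)
    (ae_restrict_of_forall_mem measurableSet_Ioc fun s hs => hK s t hs.1.le hs.2)
    (hf0.mono_set Ioc_subset_Ici_self) (hc.mono_set Ioc_subset_Ici_self)
    (ae_restrict_of_forall_mem measurableSet_Ioc fun s hs => hfc s hs.1.le) x

variable [CompleteSpace F]

theorem volterra_eq_setIntegral (hΦinv : ContinuousOn Φinv (Ici 0)) {u : ℝ → F}
    (hu : Continuous u) {t : ℝ} (ht : 0 ≤ t) :
    Φ t (∫ s in (0:ℝ)..t, Φinv s (u s)) = ∫ s in Ioc 0 t, (Φ t ∘L Φinv s) (u s) := by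
  rw [intervalIntegral.integral_of_le ht, ← (Φ t).integral_comp_comm]
  · rfl
  · exact ((hΦinv.mono Icc_subset_Ici_self).clm_apply hu.continuousOn).integrableOn_Icc.mono_set
      Ioc_subset_Icc_self

theorem volterra_add_smul (hΦinv : ContinuousOn Φinv (Ici 0)) {u v : ℝ → F} (hu : Continuous u)
    (hv : Continuous v) (ε : ℝ) {t : ℝ} (ht : 0 ≤ t) :
    Φ t (∫ s in (0:ℝ)..t, Φinv s (u s + ε • v s)) =
      Φ t (∫ s in (0:ℝ)..t, Φinv s (u s)) + ε • Φ t (∫ s in (0:ℝ)..t, Φinv s (v s)) := by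
  have hv' : IntegrableOn (fun s => ε • (Φ t ∘L Φinv s) (v s)) (Ioc 0 t) :=
    (integrableOn_volterra hΦinv hv t).smul ε
  rw [volterra_eq_setIntegral hΦinv (u := fun s => u s + ε • v s) (hu.add (hv.const_smul ε)) ht,
    volterra_eq_setIntegral hΦinv hu ht, volterra_eq_setIntegral hΦinv hv ht, ← integral_smul,
    ← integral_add (integrableOn_volterra hΦinv hu t) hv']
  simp only [map_add, map_smul]

variable [CompleteSpace E]

theorem contDiff_volterra_comp (hΦinv : ContinuousOn Φinv (Ici 0))
    (hK : ∀ s t : ℝ, 0 ≤ s → s ≤ t → ‖Φ t ∘L Φinv s‖ ≤ K) {f : ℝ → E → F} {c : ℝ → ℝ}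
    (hf : ContDiff ℝ 1 (Function.uncurry f))
    (hf0 : IntegrableOn (fun s => ‖fderiv ℝ (f s) 0‖) (Ici 0)) (hc : IntegrableOn c (Ici 0))
    (hfc : ∀ s ≥ (0:ℝ), ∀ a b, ‖fderiv ℝ (f s) a - fderiv ℝ (f s) b‖ ≤ c s * ‖a - b‖)
    {Tf : (Ici (0:ℝ) →ᵇ E) → Ici (0:ℝ) →ᵇ F}
    (hTf : ∀ x (t : Ici (0:ℝ)), Tf x t = Φ t (∫ s in (0:ℝ)..t, Φinv s (f s (x (projIci 0 s)))))
    {Tfd : (Ici (0:ℝ) →ᵇ E) → (Ici (0:ℝ) →ᵇ E) → Ici (0:ℝ) →ᵇ F}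
    (hTfd : ∀ x ψ (t : Ici (0:ℝ)), Tfd x ψ t =
      Φ t (∫ s in (0:ℝ)..t, Φinv s (fderiv ℝ (f s) (x (projIci 0 s)) (ψ (projIci 0 s))))) :
    ContDiff ℝ 1 Tf ∧ ∀ x, ∃ L : (Ici (0:ℝ) →ᵇ E) →L[ℝ] Ici (0:ℝ) →ᵇ F,
      ⇑L = Tfd x ∧ HasFDerivAt Tf L x := by
  have hK0 : 0 ≤ K := (norm_nonneg _).trans (hK 0 0 le_rfl le_rfl)
  have hfx (x : Ici (0:ℝ) →ᵇ E) : Continuous fun s => f s (x (projIci 0 s)) :=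
    hf.continuous.comp (continuous_id.prodMk x.continuous_comp_projIci)
  have hκK (t : ℝ) := ae_restrict_of_forall_mem (μ := volume) measurableSet_Ioc
    fun s (hs : s ∈ Ioc 0 t) => hK s t hs.1.le hs.2
  have hfc' (t : ℝ) := ae_restrict_of_forall_mem (μ := volume) measurableSet_Ioc
    fun s (hs : s ∈ Ioc 0 t) => hfc s hs.1.le
  have hA (t : ℝ) := integrable_volterraKernel_comp_fderiv hΦinv hK hf hf0 hc hfc t
  have hTf' x (t : Ici (0:ℝ)) :
      Tf x t = ∫ s in Ioc 0 (t:ℝ), (Φ t ∘L Φinv s) (f s (x (projIci 0 s))) :=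
    (hTf x t).trans (volterra_eq_setIntegral hΦinv (hfx x) t.2)
  have hTfd' x ψ (t : Ici (0:ℝ)) : Tfd x ψ t = kernelIntegralCLM _ _ (hA t x) ψ :=
    (hTfd x ψ t).trans (volterra_eq_setIntegral hΦinv ((hf.continuous_fderiv_uncurry.comp
      (continuous_id.prodMk x.continuous_comp_projIci)).clm_apply ψ.continuous_comp_projIci) t.2)
  choose L hL using fun x => exists_clm_of_apply_eq (hTfd' x)
  have hcI (t : ℝ) : ∫ s in Ioc 0 t, |c s| ≤ ∫ s in Ici 0, |c s| :=
    setIntegral_mono_set hc.abs (ae_of_all _ fun s => abs_nonneg _)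
      Ioc_subset_Ici_self.eventuallyLE
  have hrem x y : ‖Tf y - Tf x - L x (y - x)‖ ≤ K * (∫ s in Ici 0, |c s|) * ‖y - x‖ ^ 2 := by
    refine (norm_le (by positivity)).2 fun t => ?_
    rw [coe_sub, coe_sub, Pi.sub_apply, Pi.sub_apply, hL, hTf', hTf', hTfd']
    exact (norm_integral_comp_sub_sub_le hf (hκK t) (hc.mono_set Ioc_subset_Ici_self)
      (hfc' t) (fun x => integrableOn_volterra hΦinv (hfx x) t) (hA t x) y).trans
      (by gcongr K * ?_ * _; exact hcI t)
  have hlip x y : ‖L x - L y‖ ≤ K * (∫ s in Ici 0, |c s|) * ‖x - y‖ := by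
    refine ContinuousLinearMap.opNorm_le_bound _ (by positivity) fun ψ =>
      (norm_le (by positivity)).2 fun t => ?_
    rw [_root_.sub_apply, coe_sub, Pi.sub_apply, hL, hL, hTfd', hTfd', ← _root_.sub_apply]
    refine ((kernelIntegralCLM _ _ (hA t x) - kernelIntegralCLM _ _ (hA t y)).le_opNorm ψ).trans ?_
    gcongr
    exact (norm_kernelIntegralCLM_comp_fderiv_sub_le (hκK t) (hc.mono_set Ioc_subset_Ici_self)
      (hfc' t) (hA t x) (hA t y)).trans (by gcongr K * ?_ * _; exact hcI t)
  exact ⟨contDiff_one_of_norm_sub_le_sq hrem hlip,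
    fun x => ⟨L x, hL x, hasFDerivAt_of_norm_sub_le_sq (hrem x)⟩⟩

end Volterra

set_option maxHeartbeats 1000000 in
theorem stmt_17_general {n : ℕ}
    -- the coefficient matrix `A`, the fundamental matrix `Φ` and its pointwise inverse `Φinv`
    (A Φ Φinv : ℝ → (Euc n →L[ℝ] Euc n))
    (hΦode : ∀ t ∈ Set.Ici (0:ℝ), HasDerivWithinAt Φ (A t ∘L Φ t) (Set.Ici 0) t)
    (hΦinv : ∀ t ∈ Set.Ici (0:ℝ), Φ t ∘L Φinv t = 1 ∧ Φinv t ∘L Φ t = 1)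
    -- condition (I'): `‖Φ(t)Φ⁻¹(s)‖ ≤ K` for all `t ≥ s ≥ 0`
    (K : ℝ)
    (hKb : ∀ s t : ℝ, 0 ≤ s → s ≤ t → ‖Φ t ∘L Φinv s‖ ≤ K)
    -- the bounded linear boundary operator `Γ` and the matrix `Λ`, whose columns are `Γ(Φᵢ)`
    (Γ : Cb n →L[ℝ] Euc n)
    (ΦC : Euc n → Cb n) (hΦC : ∀ (v : Euc n) (t : Set.Ici (0:ℝ)), ΦC v t = Φ t v)
    (Λ : Euc n →L[ℝ] Euc n)
    -- `p = dim ker Λ ≥ 1`, the columns of `W` form a basis of `ker (Λᵀ)`, and `Wᵀ` is the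
    -- induced linear map `ℝⁿ → ℝᵖ`, `(Wᵀz)ᵢ = ⟪Wᵢ, z⟫`
    (p : ℕ)
    (WT : Euc n →L[ℝ] Euc p)
    -- `f` and `g` are continuously differentiable
    (f g : ℝ → Euc n → Euc n)
    (hf : ContDiff ℝ 1 fun q : ℝ × Euc n => f q.1 q.2)
    (hg : ContDiff ℝ 1 fun q : ℝ × Euc n => g q.1 q.2)
    -- conditions (II')–(V')
    (hII'b : IntegrableOn (fun t => ‖fderiv ℝ (g t) 0‖) (Set.Ici 0))
    (hIII' : ∀ x : Cb n, IntegrableOn (fun t => g t (x (Set.projIci 0 t))) (Set.Ici 0))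
    (hIV'b : IntegrableOn (fun t => ‖fderiv ℝ (f t) 0‖) (Set.Ici 0))
    (hV' : ∃ sfun : ℝ → ℝ, IntegrableOn sfun (Set.Ici 0) ∧
      ∀ t ≥ (0:ℝ), ∀ x₁ x₂ : Euc n,
        ‖fderiv ℝ (g t) x₁ - fderiv ℝ (g t) x₂‖ ≤ sfun t * ‖x₁ - x₂‖)
    -- condition (VII')
    (h₂ : ℝ → ℝ) (hh₂int : IntegrableOn h₂ (Set.Ici 0))
    (hVII' : ∀ t ≥ (0:ℝ), ∀ x₁ x₂ : Euc n,
      ‖fderiv ℝ (f t) x₁ - fderiv ℝ (f t) x₂‖ ≤ h₂ t * ‖x₁ - x₂‖)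
    -- `h ∈ 𝒞 ∩ L¹[0,∞)`
    (h : Cb n)
    -- `Tf x = Φ(·)∫₀· Φ⁻¹(s) f(s,x(s)) ds ∈ 𝒞` and
    -- `Tfd x ψ = Φ(·)∫₀· Φ⁻¹(s) (∂f/∂x)(s,x(s))ψ(s) ds ∈ 𝒞`
    (Tf : Cb n → Cb n)
    (hTf : ∀ (x : Cb n) (t : Set.Ici (0:ℝ)),
      Tf x t = Φ t (∫ s in (0:ℝ)..(t:ℝ), Φinv s (f s (x (Set.projIci 0 s)))))
    (Tfd : Cb n → Cb n → Cb n)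
    (hTfd : ∀ (x ψ : Cb n) (t : Set.Ici (0:ℝ)),
      Tfd x ψ t = Φ t (∫ s in (0:ℝ)..(t:ℝ),
        Φinv s (fderiv ℝ (f s) (x (Set.projIci 0 s)) (ψ (Set.projIci 0 s)))))
    -- the maps `H₁ : 𝒞 × ker(Λ) × ℝ → 𝒞` and `H₂ : 𝒞 × ker(Λ) × ℝ → ℝᵖ`
    (H₁ : (Cb n × ↥(LinearMap.ker (Λ : Euc n →ₗ[ℝ] Euc n))) × ℝ → Cb n)
    (hH₁ : ∀ (x : Cb n) (v : ↥(LinearMap.ker (Λ : Euc n →ₗ[ℝ] Euc n))) (ε : ℝ) (t : Set.Ici (0:ℝ)),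
      H₁ ((x, v), ε) t = x t - Φ t (v : Euc n) -
        Φ t (∫ s in (0:ℝ)..(t:ℝ),
          Φinv s (h (Set.projIci 0 s) + ε • f s (x (Set.projIci 0 s)))))
    (H₂ : (Cb n × ↥(LinearMap.ker (Λ : Euc n →ₗ[ℝ] Euc n))) × ℝ → Euc p)
    (hH₂ : ∀ (x : Cb n) (v : ↥(LinearMap.ker (Λ : Euc n →ₗ[ℝ] Euc n))) (ε : ℝ),
      H₂ ((x, v), ε) =
        WT ((∫ t in Set.Ici (0:ℝ), g t (x (Set.projIci 0 t))) - Γ (Tf x))) :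
    -- `H = (H₁,H₂)` is continuously Fréchet differentiable and its partial derivative in `(x,v)`
    -- is the stated bounded linear map
    ContDiff ℝ 1 (fun q => (H₁ q, H₂ q)) ∧
      ∀ (x : Cb n) (v : ↥(LinearMap.ker (Λ : Euc n →ₗ[ℝ] Euc n))) (ε : ℝ)
        (D : (Cb n × ↥(LinearMap.ker (Λ : Euc n →ₗ[ℝ] Euc n))) →L[ℝ] (Cb n × Euc p)),
        (∀ (ψ : Cb n) (w : ↥(LinearMap.ker (Λ : Euc n →ₗ[ℝ] Euc n))),
          (∀ t : Set.Ici (0:ℝ),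
            (D (ψ, w)).1 t = ψ t - Φ t (w : Euc n) -
              ε • Φ t (∫ s in (0:ℝ)..(t:ℝ),
                Φinv s (fderiv ℝ (f s) (x (Set.projIci 0 s)) (ψ (Set.projIci 0 s))))) ∧
          (D (ψ, w)).2 =
            WT ((∫ t in Set.Ici (0:ℝ),
                fderiv ℝ (g t) (x (Set.projIci 0 t)) (ψ (Set.projIci 0 t))) -
              Γ (Tfd x ψ))) →
        HasFDerivAt (fun q => (H₁ (q, ε), H₂ (q, ε))) D (x, v) := by
  have hΦinvc : ContinuousOn Φinv (Ici 0) :=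
    ContinuousOn.of_pointwise_inverse (fun t ht => (hΦode t ht).continuousWithinAt) hΦinv
  obtain ⟨hTfC, hTfD⟩ := contDiff_volterra_comp hΦinvc hKb hf hIV'b hh₂int hVII' hTf hTfd
  obtain ⟨s, hs, hgs⟩ := hV'
  obtain ⟨hGC, hGD⟩ := contDiff_setIntegral_Ici_comp hg hII'b hs hgs hIII'
  obtain ⟨ΦL, hΦL⟩ := exists_clm_of_apply_eq
    (ℓ := fun t : Ici (0:ℝ) => Φ t ∘L (LinearMap.ker (Λ : Euc n →ₗ[ℝ] Euc n)).subtypeL)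
    fun v t => hΦC v t
  set G := fun x : Cb n => ∫ t in Ici 0, g t (x (projIci 0 t))
  have hH : ∀ q, (H₁ q, H₂ q) =
      (q.1.1 - ΦL q.1.2 + H₁ ((0, 0), 0) - q.2 • Tf q.1.1, WT (G q.1.1 - Γ (Tf q.1.1))) := by
    rintro ⟨⟨x, v⟩, ε⟩
    refine Prod.ext (ext fun t => ?_) (hH₂ x v ε)
    have hfy (y : Cb n) : Continuous fun s => f s (y (projIci 0 s)) :=
      hf.continuous.comp (continuous_id.prodMk y.continuous_comp_projIci)
    have hsplit (y : Cb n) := volterra_add_smul (Φ := Φ) hΦinvc h.continuous_comp_projIci (hfy y)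
    simp only [coe_sub, coe_add, coe_smul, Pi.sub_apply, Pi.add_apply, hH₁, hΦL, hΦC, hTf,
      hsplit x ε t.2, hsplit 0 0 t.2]
    simp only [coe_zero, Pi.zero_apply, ZeroMemClass.coe_zero, map_zero, zero_smul, add_zero]
    abel
  refine ⟨by simp only [hH]; fun_prop, fun x v ε D hD => ?_⟩
  obtain ⟨LTf, hLTf, hTfx⟩ := hTfD x
  obtain ⟨LG, hLG, hGx⟩ := hGD x
  have hfst := hasFDerivAt_fst (𝕜 := ℝ) (p := (x, v))
  have hTfq := hTfx.comp (x, v) hfst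
  have hlin := (ContinuousLinearMap.fst ℝ _ _ - ΦL ∘L ContinuousLinearMap.snd ℝ _ _).hasFDerivAt
    (x := (x, v))
  have key := ((hlin.add_const (H₁ ((0, 0), 0))).sub (hTfq.const_smul ε)).prodMk
    (WT.hasFDerivAt.comp (x, v) ((hGx.comp (x, v) hfst).sub (Γ.hasFDerivAt.comp (x, v) hTfq)))
  rw [show (fun q => (H₁ (q, ε), H₂ (q, ε))) = _ from funext fun q => hH (q, ε)]
  refine key.congr_fderiv (ContinuousLinearMap.ext fun ⟨ψ, w⟩ => Prod.ext (ext fun t => ?_) ?_)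
  · simp [(hD ψ w).1 t, hLTf, hTfd, hΦL, hΦC]
  · simp [(hD ψ w).2, hLTf, hLG]

set_option maxHeartbeats 1000000 in
theorem stmt_17 {n : ℕ} (hn : 1 ≤ n)
    -- the coefficient matrix `A`, the fundamental matrix `Φ` and its pointwise inverse `Φinv`
    (A Φ Φinv : ℝ → (Euc n →L[ℝ] Euc n))
    (hA : ContinuousOn A (Set.Ici 0))
    (hΦ0 : Φ 0 = 1)
    (hΦode : ∀ t ∈ Set.Ici (0:ℝ), HasDerivWithinAt Φ (A t ∘L Φ t) (Set.Ici 0) t)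
    (hΦinv : ∀ t ∈ Set.Ici (0:ℝ), Φ t ∘L Φinv t = 1 ∧ Φinv t ∘L Φ t = 1)
    -- condition (I'): `‖Φ(t)Φ⁻¹(s)‖ ≤ K` for all `t ≥ s ≥ 0`
    (K : ℝ) (hK : 0 < K)
    (hKb : ∀ s t : ℝ, 0 ≤ s → s ≤ t → ‖Φ t ∘L Φinv s‖ ≤ K)
    -- the bounded linear boundary operator `Γ` and the matrix `Λ`, whose columns are `Γ(Φᵢ)`
    (Γ : Cb n →L[ℝ] Euc n)
    (ΦC : Euc n → Cb n) (hΦC : ∀ (v : Euc n) (t : Set.Ici (0:ℝ)), ΦC v t = Φ t v)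
    (Λ : Euc n →L[ℝ] Euc n) (hΛ : ∀ v, Λ v = Γ (ΦC v))
    -- `p = dim ker Λ ≥ 1`, the columns of `W` form a basis of `ker (Λᵀ)`, and `Wᵀ` is the
    -- induced linear map `ℝⁿ → ℝᵖ`, `(Wᵀz)ᵢ = ⟪Wᵢ, z⟫`
    (p : ℕ) (hp : 1 ≤ p)
    (hfinrank : Module.finrank ℝ (LinearMap.ker (Λ : Euc n →ₗ[ℝ] Euc n)) = p)
    (W : Fin p → Euc n)
    (hWmem : ∀ i, W i ∈ LinearMap.ker (ContinuousLinearMap.adjoint Λ : Euc n →ₗ[ℝ] Euc n))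
    (hWli : LinearIndependent ℝ W)
    (hWspan : Submodule.span ℝ (Set.range W) = LinearMap.ker (ContinuousLinearMap.adjoint Λ : Euc n →ₗ[ℝ] Euc n))
    (WT : Euc n →L[ℝ] Euc p) (hWT : ∀ z i, WT z i = ⟪W i, z⟫)
    -- `f` and `g` are continuously differentiable
    (f g : ℝ → Euc n → Euc n)
    (hf : ContDiff ℝ 1 fun q : ℝ × Euc n => f q.1 q.2)
    (hg : ContDiff ℝ 1 fun q : ℝ × Euc n => g q.1 q.2)
    -- conditions (II')–(V')
    (hII'a : UniformContinuousOn (fun q : ℝ × Euc n => fderiv ℝ (g q.1) q.2)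
      (Set.Ici 0 ×ˢ (Set.univ : Set (Euc n))))
    (hII'b : IntegrableOn (fun t => ‖fderiv ℝ (g t) 0‖) (Set.Ici 0))
    (hIII' : ∀ x : Cb n, IntegrableOn (fun t => g t (x (Set.projIci 0 t))) (Set.Ici 0))
    (hIV'a : UniformContinuousOn (fun q : ℝ × Euc n => fderiv ℝ (f q.1) q.2)
      (Set.Ici 0 ×ˢ (Set.univ : Set (Euc n))))
    (hIV'b : IntegrableOn (fun t => ‖fderiv ℝ (f t) 0‖) (Set.Ici 0))
    (hV' : ∃ sfun : ℝ → ℝ, IntegrableOn sfun (Set.Ici 0) ∧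
      ∀ t ≥ (0:ℝ), ∀ x₁ x₂ : Euc n,
        ‖fderiv ℝ (g t) x₁ - fderiv ℝ (g t) x₂‖ ≤ sfun t * ‖x₁ - x₂‖)
    -- condition (VI')
    (h₁ : ℝ → ℝ) (hh₁int : IntegrableOn h₁ (Set.Ici 0))
    (hVI' : ∀ S : Set (Euc n), IsCompact S → ∃ C : ℝ,
      (∀ t ≥ (0:ℝ), ∀ x ∈ S, ‖f t x‖ ≤ C * h₁ t) ∧
      (∀ t ≥ (0:ℝ), ∀ x₁ ∈ S, ∀ x₂ ∈ S, ‖f t x₁ - f t x₂‖ ≤ h₁ t * ‖x₁ - x₂‖))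
    -- condition (VII')
    (h₂ : ℝ → ℝ) (hh₂int : IntegrableOn h₂ (Set.Ici 0))
    (hVII' : ∀ t ≥ (0:ℝ), ∀ x₁ x₂ : Euc n,
      ‖fderiv ℝ (f t) x₁ - fderiv ℝ (f t) x₂‖ ≤ h₂ t * ‖x₁ - x₂‖)
    -- `h ∈ 𝒞 ∩ L¹[0,∞)`
    (h : Cb n) (hhint : IntegrableOn (fun t => h (Set.projIci 0 t)) (Set.Ici 0))
    -- `Tf x = Φ(·)∫₀· Φ⁻¹(s) f(s,x(s)) ds ∈ 𝒞` and
    -- `Tfd x ψ = Φ(·)∫₀· Φ⁻¹(s) (∂f/∂x)(s,x(s))ψ(s) ds ∈ 𝒞`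
    (Tf : Cb n → Cb n)
    (hTf : ∀ (x : Cb n) (t : Set.Ici (0:ℝ)),
      Tf x t = Φ t (∫ s in (0:ℝ)..(t:ℝ), Φinv s (f s (x (Set.projIci 0 s)))))
    (Tfd : Cb n → Cb n → Cb n)
    (hTfd : ∀ (x ψ : Cb n) (t : Set.Ici (0:ℝ)),
      Tfd x ψ t = Φ t (∫ s in (0:ℝ)..(t:ℝ),
        Φinv s (fderiv ℝ (f s) (x (Set.projIci 0 s)) (ψ (Set.projIci 0 s)))))
    -- the maps `H₁ : 𝒞 × ker(Λ) × ℝ → 𝒞` and `H₂ : 𝒞 × ker(Λ) × ℝ → ℝᵖ`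
    (H₁ : (Cb n × ↥(LinearMap.ker (Λ : Euc n →ₗ[ℝ] Euc n))) × ℝ → Cb n)
    (hH₁ : ∀ (x : Cb n) (v : ↥(LinearMap.ker (Λ : Euc n →ₗ[ℝ] Euc n))) (ε : ℝ) (t : Set.Ici (0:ℝ)),
      H₁ ((x, v), ε) t = x t - Φ t (v : Euc n) -
        Φ t (∫ s in (0:ℝ)..(t:ℝ),
          Φinv s (h (Set.projIci 0 s) + ε • f s (x (Set.projIci 0 s)))))
    (H₂ : (Cb n × ↥(LinearMap.ker (Λ : Euc n →ₗ[ℝ] Euc n))) × ℝ → Euc p)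
    (hH₂ : ∀ (x : Cb n) (v : ↥(LinearMap.ker (Λ : Euc n →ₗ[ℝ] Euc n))) (ε : ℝ),
      H₂ ((x, v), ε) =
        WT ((∫ t in Set.Ici (0:ℝ), g t (x (Set.projIci 0 t))) - Γ (Tf x))) :
    -- `H = (H₁,H₂)` is continuously Fréchet differentiable and its partial derivative in `(x,v)`
    -- is the stated bounded linear map
    ContDiff ℝ 1 (fun q => (H₁ q, H₂ q)) ∧
      ∀ (x : Cb n) (v : ↥(LinearMap.ker (Λ : Euc n →ₗ[ℝ] Euc n))) (ε : ℝ)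
        (D : (Cb n × ↥(LinearMap.ker (Λ : Euc n →ₗ[ℝ] Euc n))) →L[ℝ] (Cb n × Euc p)),
        (∀ (ψ : Cb n) (w : ↥(LinearMap.ker (Λ : Euc n →ₗ[ℝ] Euc n))),
          (∀ t : Set.Ici (0:ℝ),
            (D (ψ, w)).1 t = ψ t - Φ t (w : Euc n) -
              ε • Φ t (∫ s in (0:ℝ)..(t:ℝ),
                Φinv s (fderiv ℝ (f s) (x (Set.projIci 0 s)) (ψ (Set.projIci 0 s))))) ∧
          (D (ψ, w)).2 =
            WT ((∫ t in Set.Ici (0:ℝ),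
                fderiv ℝ (g t) (x (Set.projIci 0 t)) (ψ (Set.projIci 0 t))) -
              Γ (Tfd x ψ))) →
        HasFDerivAt (fun q => (H₁ (q, ε), H₂ (q, ε))) D (x, v) :=
  stmt_17_general A Φ Φinv hΦode hΦinv K hKb Γ ΦC hΦC Λ p WT f g hf hg hII'b hIII' hIV'b hV' h₂
    hh₂int hVII' h Tf hTf Tfd hTfd H₁ hH₁ H₂ hH₂
end
end
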